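/- arXiv:2501.05348 — 5 statements merged into one kernel-verified Lean document; each statement's English description precedes it below -/
import Mathlib

section
/- The Petersen graph has exactly 6 perfect matchings, and every edge of the Petersen graph lies in exactly 2 of these 6 perfect matchings. -/
/-- Vertices of the Petersen graph: 2-element subsets of a 5-element set. -/
abbrev PetersenVertex : Type := {s : Finset (Fin 5) // s.card = 2}

/-- The Petersen graph as the Kneser graph K(5,2): two 2-subsets are
adjacent iff they are disjoint. -/
def petersen : SimpleGraph PetersenVertex :=
  SimpleGraph.fromRel (fun a b => Disjoint a.1 b.1)

/-!
A perfect matching is determined by its edge set, and a set of edges of a graph is the edge set of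
a perfect matching exactly when every vertex lies in exactly one of its edges. By double counting
such a set has `|V| / 2` edges, so both counts reduce to an enumeration of the 5-element subsets of
the 15 edges of the Petersen graph, which `decide` carries out.
-/

open Finset

namespace SimpleGraph

variable {V : Type*} {G : SimpleGraph V}

theorem Subgraph.existsUnique_mem_edgeSet_iff (M : G.Subgraph) (v : V) :
    (∃! e, e ∈ M.edgeSet ∧ v ∈ e) ↔ ∃! w, M.Adj v w := by
  constructor
  · rintro ⟨e, ⟨he, hve⟩, huniq⟩
    obtain ⟨w, rfl⟩ := Sym2.mem_iff_exists.mp hve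
    exact ⟨w, he, fun w' hw' => Sym2.congr_right.mp (huniq _ ⟨hw', Sym2.mem_mk_left v w'⟩)⟩
  · rintro ⟨w, hw, huniq⟩
    refine ⟨s(v, w), ⟨hw, Sym2.mem_mk_left v w⟩, ?_⟩
    rintro e ⟨he, hve⟩
    obtain ⟨w', rfl⟩ := Sym2.mem_iff_exists.mp hve
    rw [huniq w' he]

theorem Subgraph.isPerfectMatching_iff_forall_existsUnique_mem_edgeSet (M : G.Subgraph) :
    M.IsPerfectMatching ↔ ∀ v, ∃! e, e ∈ M.edgeSet ∧ v ∈ e := by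
  simp only [Subgraph.isPerfectMatching_iff, M.existsUnique_mem_edgeSet_iff]

theorem exists_subgraph_edgeSet_eq {S : Set (Sym2 V)} (hS : S ⊆ G.edgeSet) :
    ∃ M : G.Subgraph, M.edgeSet = S := by
  refine ⟨toSubgraph (fromEdgeSet S) ((fromEdgeSet_le G).mpr (Set.sdiff_subset.trans hS)), ?_⟩
  change (fromEdgeSet S).edgeSet = S
  rw [edgeSet_fromEdgeSet, sdiff_eq_left]
  exact Set.disjoint_left.mpr fun e he => G.not_isDiag_of_mem_edgeSet (hS he)

variable [Fintype V] [DecidableEq V] (G) [DecidableRel G.Adj]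

def perfectMatchingEdgeFinsets : Finset (Finset (Sym2 V)) :=
  {s ∈ G.edgeFinset.powerset | ∀ v, #{e ∈ s | v ∈ e} = 1}

theorem mem_perfectMatchingEdgeFinsets {s : Finset (Sym2 V)} :
    s ∈ G.perfectMatchingEdgeFinsets ↔ s ⊆ G.edgeFinset ∧ ∀ v, ∃! e, e ∈ s ∧ v ∈ e := by
  simp only [perfectMatchingEdgeFinsets, mem_filter, mem_powerset, card_eq_one_iff_existsUnique]

theorem sum_card_filter_mem_eq_two_mul_card {s : Finset (Sym2 V)} (hs : s ⊆ G.edgeFinset) :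
    ∑ v, #{e ∈ s | v ∈ e} = 2 * #s := by
  have hcard (e) (he : e ∈ s) : #{v | v ∈ e} = 2 := by
    rw [← e.card_toFinset_of_not_isDiag (G.not_isDiag_of_mem_edgeSet (mem_edgeFinset.mp (hs he)))]
    congr 1
    ext v
    simp
  calc ∑ v, #{e ∈ s | v ∈ e}
      = ∑ e ∈ s, #{v | v ∈ e} := sum_card_bipartiteAbove_eq_sum_card_bipartiteBelow (· ∈ ·)
    _ = ∑ e ∈ s, 2 := sum_congr rfl hcard
    _ = 2 * #s := by rw [sum_const, smul_eq_mul, mul_comm]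

theorem perfectMatchingEdgeFinsets_eq_filter_powersetCard :
    G.perfectMatchingEdgeFinsets =
      {s ∈ G.edgeFinset.powersetCard (Fintype.card V / 2) | ∀ v, #{e ∈ s | v ∈ e} = 1} := by
  ext s
  simp only [perfectMatchingEdgeFinsets, mem_filter, mem_powerset, mem_powersetCard,
    and_congr_left_iff, iff_self_and]
  intro hmatch hs
  have := G.sum_card_filter_mem_eq_two_mul_card hs
  rw [sum_congr rfl fun v _ => hmatch v, sum_const, card_univ, smul_eq_mul, mul_one] at this
  omega

theorem image_edgeSet_setOf_isPerfectMatching :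
    Subgraph.edgeSet '' {M : G.Subgraph | M.IsPerfectMatching} =
      (↑) '' (G.perfectMatchingEdgeFinsets : Set (Finset (Sym2 V))) := by
  ext S
  constructor
  · rintro ⟨M, hM, rfl⟩
    refine ⟨M.edgeSet.toFinite.toFinset, ?_, Set.Finite.coe_toFinset _⟩
    rw [mem_coe, mem_perfectMatchingEdgeFinsets, Set.Finite.toFinset_subset, coe_edgeFinset]
    simpa only [Set.Finite.mem_toFinset] using
      ⟨M.edgeSet_subset, (M.isPerfectMatching_iff_forall_existsUnique_mem_edgeSet).mp hM⟩
  · rintro ⟨s, hs, rfl⟩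
    rw [mem_coe, mem_perfectMatchingEdgeFinsets] at hs
    obtain ⟨M, hM⟩ := exists_subgraph_edgeSet_eq (G := G) (S := s)
      (by simpa only [← coe_edgeFinset, coe_subset] using hs.1)
    refine ⟨M, M.isPerfectMatching_iff_forall_existsUnique_mem_edgeSet.mpr ?_, hM⟩
    simpa only [hM, mem_coe] using hs.2

theorem ncard_setOf_isPerfectMatching_and_subset_edgeSet (F : Finset (Sym2 V)) :
    {M : G.Subgraph | M.IsPerfectMatching ∧ ↑F ⊆ M.edgeSet}.ncard =
      #{s ∈ G.perfectMatchingEdgeFinsets | F ⊆ s} := by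
  have hinj :
      Set.InjOn Subgraph.edgeSet {M : G.Subgraph | M.IsPerfectMatching ∧ ↑F ⊆ M.edgeSet} :=
    Subgraph.IsMatching.injOn_edgeSet.mono fun M hM => hM.1.1
  rw [← hinj.ncard_image, ← Set.ncard_coe_finset, ← coe_injective.injOn.ncard_image]
  congr 1
  calc Subgraph.edgeSet '' {M : G.Subgraph | M.IsPerfectMatching ∧ ↑F ⊆ M.edgeSet}
      = Subgraph.edgeSet '' {M : G.Subgraph | M.IsPerfectMatching} ∩ {S | ↑F ⊆ S} := by
        rw [← Set.image_inter_preimage]; rfl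
    _ = (↑) '' (G.perfectMatchingEdgeFinsets : Set (Finset (Sym2 V))) ∩ {S | ↑F ⊆ S} := by
        rw [image_edgeSet_setOf_isPerfectMatching]
    _ = ((↑) : Finset (Sym2 V) → Set (Sym2 V)) ''
          ↑({s ∈ G.perfectMatchingEdgeFinsets | F ⊆ s}) := by
        rw [← Set.image_inter_preimage, coe_filter]
        simp only [Set.preimage_ofPred_eq, coe_subset]
        rfl

end SimpleGraph

instance : DecidableRel petersen.Adj := fun a b =>
  inferInstanceAs (Decidable (a ≠ b ∧ (Disjoint a.1 b.1 ∨ Disjoint b.1 a.1)))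

set_option maxRecDepth 10000 in
theorem card_perfectMatchingEdgeFinsets_petersen :
    #petersen.perfectMatchingEdgeFinsets = 6 := by
  rw [SimpleGraph.perfectMatchingEdgeFinsets_eq_filter_powersetCard]
  decide

set_option maxRecDepth 10000 in
theorem card_filter_mem_perfectMatchingEdgeFinsets_petersen :
    ∀ e ∈ petersen.edgeFinset, #{s ∈ petersen.perfectMatchingEdgeFinsets | e ∈ s} = 2 := by
  rw [SimpleGraph.perfectMatchingEdgeFinsets_eq_filter_powersetCard]
  decide

/-- The Petersen graph has exactly 6 perfect matchings, and every edge lies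
in exactly 2 of them. -/
theorem stmt3 :
    Set.ncard {M : petersen.Subgraph | M.IsPerfectMatching} = 6 ∧
    ∀ e ∈ petersen.edgeSet,
      Set.ncard {M : petersen.Subgraph | M.IsPerfectMatching ∧ e ∈ M.edgeSet} = 2 := by
  refine ⟨?_, fun e he => ?_⟩
  · have h := petersen.ncard_setOf_isPerfectMatching_and_subset_edgeSet ∅
    simp only [coe_empty, Set.empty_subset, and_true, empty_subset, filter_true] at h
    rw [h, card_perfectMatchingEdgeFinsets_petersen]
  · have h := petersen.ncard_setOf_isPerfectMatching_and_subset_edgeSet {e}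
    simp only [coe_singleton, Set.singleton_subset_iff, singleton_subset_iff] at h
    rw [h, card_filter_mem_perfectMatchingEdgeFinsets_petersen e
      (SimpleGraph.mem_edgeFinset.mpr he)]
end

section
/- The Petersen graph does not admit a 9-cycle 6-cover: there is no list of 9 even subgraphs of the Petersen graph such that every edge is contained in exactly 6 of them. -/
/-- An even subgraph (cycle) of `G`, given by its edge set: a subset of the
edges of `G` in which every vertex has even degree. -/
def IsEvenSubgraph {V : Type*} (G : SimpleGraph V) (E : Set (Sym2 V)) : Prop :=
  E ⊆ G.edgeSet ∧ ∀ v : V, Even (Set.ncard {w : V | s(v, w) ∈ E})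

set_option maxRecDepth 8000
set_option maxHeartbeats 1000000

instance inst_s5 : DecidableRel petersen.Adj := fun a b =>
  inferInstanceAs (Decidable (a ≠ b ∧ (Disjoint a.1 b.1 ∨ Disjoint b.1 a.1)))

def pv (a b : Fin 5) (h : ({a,b} : Finset (Fin 5)).card = 2 := by decide) :
    PetersenVertex := ⟨{a,b}, h⟩

def pe (a b c d : Fin 5)
    (h1 : ({a,b} : Finset (Fin 5)).card = 2 := by decide)
    (h2 : ({c,d} : Finset (Fin 5)).card = 2 := by decide) : Sym2 PetersenVertex :=
  s(⟨{a,b},h1⟩, ⟨{c,d},h2⟩)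

/-- The six perfect matchings of the Petersen graph. -/
def M : Fin 6 → Finset (Sym2 PetersenVertex)
  | 0 => {pe 0 1 3 4, pe 0 2 1 4, pe 1 2 0 3, pe 1 3 2 4, pe 2 3 0 4}
  | 1 => {pe 0 1 3 4, pe 0 2 1 3, pe 1 2 0 4, pe 0 3 2 4, pe 2 3 1 4}
  | 2 => {pe 0 1 2 4, pe 0 2 3 4, pe 1 2 0 3, pe 1 3 0 4, pe 2 3 1 4}
  | 3 => {pe 0 1 2 4, pe 0 2 1 3, pe 1 2 3 4, pe 0 3 1 4, pe 2 3 0 4}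
  | 4 => {pe 0 1 2 3, pe 0 2 3 4, pe 1 2 0 4, pe 0 3 1 4, pe 1 3 2 4}
  | 5 => {pe 0 1 2 3, pe 0 2 1 4, pe 1 2 3 4, pe 0 3 2 4, pe 1 3 0 4}

set_option maxRecDepth 10000 in
set_option synthInstance.maxHeartbeats 1000000 in
set_option synthInstance.maxSize 2000 in
set_option maxHeartbeats 4000000 in
lemma key : ∀ e1 ∈ petersen.edgeFinset.filter (fun e => pv 1 2 ∈ e),
    ∀ e2 ∈ petersen.edgeFinset.filter (fun e => pv 1 3 ∈ e),
    ∀ e3 ∈ petersen.edgeFinset.filter (fun e => pv 1 4 ∈ e),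
    ∀ e4 ∈ petersen.edgeFinset.filter (fun e => pv 2 3 ∈ e),
    ∀ e5 ∈ petersen.edgeFinset.filter (fun e => pv 2 4 ∈ e),
    ∀ e6 ∈ petersen.edgeFinset.filter (fun e => pv 3 4 ∈ e),
    (∀ v, (({e1,e2,e3,e4,e5,e6} : Finset (Sym2 PetersenVertex)).filter (fun e => v ∈ e)).card = 1) →
    ∃ k : Fin 6, ({e1,e2,e3,e4,e5,e6} : Finset (Sym2 PetersenVertex)) = M k := by decide

/-- every Petersen edge has an endpoint among the six pairs from {1,2,3,4}. -/
lemma vertexCover : ∀ e ∈ petersen.edgeFinset,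
    pv 1 2 ∈ e ∨ pv 1 3 ∈ e ∨ pv 1 4 ∈ e ∨ pv 2 3 ∈ e ∨ pv 2 4 ∈ e ∨ pv 3 4 ∈ e := by decide

lemma endpoints2 : ∀ e ∈ petersen.edgeFinset,
    (Finset.univ.filter (fun v => v ∈ e)).card = 2 := by decide

lemma deg3 : ∀ v : PetersenVertex,
    (petersen.edgeFinset.filter (fun e => v ∈ e)).card = 3 := by decide

lemma edge15 : petersen.edgeFinset.card = 15 := by decide

lemma vert10 : (Finset.univ : Finset PetersenVertex).card = 10 := by decide

lemma M_inter : ∀ k k' : Fin 6, M k = M k' ∨ ((M k) ∩ (M k')).card = 1 := by decide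

open Finset

/-- handshake for sub-edge-sets of the Petersen graph -/
lemma handshake (D : Finset (Sym2 PetersenVertex)) (hD : D ⊆ petersen.edgeFinset) :
    ∑ v : PetersenVertex, (D.filter (fun e => v ∈ e)).card = 2 * D.card := by
  calc ∑ v : PetersenVertex, (D.filter (fun e => v ∈ e)).card
      = ∑ v : PetersenVertex, ∑ e ∈ D, if v ∈ e then 1 else 0 :=
        Finset.sum_congr rfl (fun v _ => Finset.card_filter _ _)
    _ = ∑ e ∈ D, ∑ v : PetersenVertex, if v ∈ e then 1 else 0 := Finset.sum_comm
    _ = ∑ e ∈ D, 2 := Finset.sum_congr rfl (fun e he => by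
        rw [← Finset.card_filter]; exact endpoints2 e (hD he))
    _ = 2 * D.card := by rw [Finset.sum_const, smul_eq_mul, mul_comm]

/-- counting neighbours vs counting incident edges -/
lemma bridge (v : PetersenVertex) (D : Finset (Sym2 PetersenVertex))
    (hD : D ⊆ petersen.edgeFinset) :
    (Finset.univ.filter (fun w => s(v,w) ∈ D)).card = (D.filter (fun e => v ∈ e)).card := by
  apply Finset.card_bij (fun w _ => s(v,w))
  · intro w hw
    simp only [Finset.mem_filter, Finset.mem_univ, true_and] at hw ⊢
    exact ⟨hw, Sym2.mem_mk_left v w⟩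
  · intro w hw w' hw' h
    exact (Sym2.congr_right).mp h
  · intro e he
    simp only [Finset.mem_filter] at he
    obtain ⟨w, rfl⟩ := Sym2.mem_iff_exists.mp he.2
    exact ⟨w, by simp [he.1], rfl⟩

/-- every perfect matching of the Petersen graph is one of the six. -/
lemma classify (D : Finset (Sym2 PetersenVertex)) (hsub : D ⊆ petersen.edgeFinset)
    (hcov : ∀ v, (D.filter (fun e => v ∈ e)).card = 1) : ∃ k : Fin 6, D = M k := by
  obtain ⟨e1, h1⟩ := Finset.card_eq_one.mp (hcov (pv 1 2))
  obtain ⟨e2, h2⟩ := Finset.card_eq_one.mp (hcov (pv 1 3))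
  obtain ⟨e3, h3⟩ := Finset.card_eq_one.mp (hcov (pv 1 4))
  obtain ⟨e4, h4⟩ := Finset.card_eq_one.mp (hcov (pv 2 3))
  obtain ⟨e5, h5⟩ := Finset.card_eq_one.mp (hcov (pv 2 4))
  obtain ⟨e6, h6⟩ := Finset.card_eq_one.mp (hcov (pv 3 4))
  have m1 : e1 ∈ D ∧ pv 1 2 ∈ e1 := by
    have : e1 ∈ D.filter (fun e => pv 1 2 ∈ e) := by rw [h1]; exact Finset.mem_singleton_self e1
    exact Finset.mem_filter.mp this
  have m2 : e2 ∈ D ∧ pv 1 3 ∈ e2 := by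
    have : e2 ∈ D.filter (fun e => pv 1 3 ∈ e) := by rw [h2]; exact Finset.mem_singleton_self e2
    exact Finset.mem_filter.mp this
  have m3 : e3 ∈ D ∧ pv 1 4 ∈ e3 := by
    have : e3 ∈ D.filter (fun e => pv 1 4 ∈ e) := by rw [h3]; exact Finset.mem_singleton_self e3
    exact Finset.mem_filter.mp this
  have m4 : e4 ∈ D ∧ pv 2 3 ∈ e4 := by
    have : e4 ∈ D.filter (fun e => pv 2 3 ∈ e) := by rw [h4]; exact Finset.mem_singleton_self e4
    exact Finset.mem_filter.mp this
  have m5 : e5 ∈ D ∧ pv 2 4 ∈ e5 := by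
    have : e5 ∈ D.filter (fun e => pv 2 4 ∈ e) := by rw [h5]; exact Finset.mem_singleton_self e5
    exact Finset.mem_filter.mp this
  have m6 : e6 ∈ D ∧ pv 3 4 ∈ e6 := by
    have : e6 ∈ D.filter (fun e => pv 3 4 ∈ e) := by rw [h6]; exact Finset.mem_singleton_self e6
    exact Finset.mem_filter.mp this
  have hD : D = ({e1,e2,e3,e4,e5,e6} : Finset (Sym2 PetersenVertex)) := by
    ext e
    constructor
    · intro he
      simp only [Finset.mem_insert, Finset.mem_singleton]
      rcases vertexCover e (hsub he) with h | h | h | h | h | h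
      · exact Or.inl (Finset.mem_singleton.mp (h1 ▸ Finset.mem_filter.mpr ⟨he, h⟩))
      · exact Or.inr (Or.inl (Finset.mem_singleton.mp (h2 ▸ Finset.mem_filter.mpr ⟨he, h⟩)))
      · exact Or.inr (Or.inr (Or.inl (Finset.mem_singleton.mp (h3 ▸ Finset.mem_filter.mpr ⟨he, h⟩))))
      · exact Or.inr (Or.inr (Or.inr (Or.inl (Finset.mem_singleton.mp (h4 ▸ Finset.mem_filter.mpr ⟨he, h⟩)))))
      · exact Or.inr (Or.inr (Or.inr (Or.inr (Or.inl (Finset.mem_singleton.mp (h5 ▸ Finset.mem_filter.mpr ⟨he, h⟩))))))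
      · exact Or.inr (Or.inr (Or.inr (Or.inr (Or.inr (Finset.mem_singleton.mp (h6 ▸ Finset.mem_filter.mpr ⟨he, h⟩))))))
    · intro he
      simp only [Finset.mem_insert, Finset.mem_singleton] at he
      rcases he with rfl | rfl | rfl | rfl | rfl | rfl
      exacts [m1.1, m2.1, m3.1, m4.1, m5.1, m6.1]
  rw [hD]
  exact key e1 (Finset.mem_filter.mpr ⟨hsub m1.1, m1.2⟩)
    e2 (Finset.mem_filter.mpr ⟨hsub m2.1, m2.2⟩)
    e3 (Finset.mem_filter.mpr ⟨hsub m3.1, m3.2⟩)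
    e4 (Finset.mem_filter.mpr ⟨hsub m4.1, m4.2⟩)
    e5 (Finset.mem_filter.mpr ⟨hsub m5.1, m5.2⟩)
    e6 (Finset.mem_filter.mpr ⟨hsub m6.1, m6.2⟩)
    (hD ▸ hcov)

/-- The Petersen graph does not admit a 9-cycle 6-cover: there is no list of
9 even subgraphs such that every edge is contained in exactly 6 of them. -/
theorem stmt5 :
    ¬ ∃ C : Fin 9 → Set (Sym2 PetersenVertex),
      (∀ i, IsEvenSubgraph petersen (C i)) ∧
      (∀ e ∈ petersen.edgeSet, Set.ncard {i : Fin 9 | e ∈ C i} = 6) := by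
  rintro ⟨C, hC, hcov⟩
  classical
  set E := petersen.edgeFinset with hEdef
  set F : Fin 9 → Finset (Sym2 PetersenVertex) :=
    fun i => E.filter (fun e => e ∈ C i) with hFdef
  have hFsub : ∀ i, F i ⊆ E := fun i => Finset.filter_subset _ _
  have hmemF : ∀ i e, e ∈ F i ↔ e ∈ C i := by
    intro i e
    simp only [hFdef, Finset.mem_filter]
    exact ⟨And.right, fun h => ⟨SimpleGraph.mem_edgeFinset.mpr ((hC i).1 h), h⟩⟩
  -- per-vertex incidence counts in F i are even and at most 3, hence 0 or 2
  have heven : ∀ i v, Even (((F i).filter (fun e => v ∈ e)).card) := by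
    intro i v
    have h := (hC i).2 v
    have hset : {w : PetersenVertex | s(v,w) ∈ C i}
        = ↑(Finset.univ.filter (fun w => s(v,w) ∈ F i)) := by
      ext w; simp [hmemF]
    rw [hset, Set.ncard_coe_finset, bridge v (F i) (hFsub i)] at h
    exact h
  have hdeg02 : ∀ i v, ((F i).filter (fun e => v ∈ e)).card = 0 ∨
      ((F i).filter (fun e => v ∈ e)).card = 2 := by
    intro i v
    have hle : ((F i).filter (fun e => v ∈ e)).card ≤ 3 := by
      calc ((F i).filter (fun e => v ∈ e)).card
          ≤ (E.filter (fun e => v ∈ e)).card :=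
            Finset.card_le_card (Finset.filter_subset_filter _ (hFsub i))
        _ = 3 := deg3 v
    obtain ⟨k, hk⟩ := heven i v
    omega
  have hcard10 : ∀ i, (F i).card ≤ 10 := by
    intro i
    have h := handshake (F i) (hFsub i)
    have hle : ∑ v : PetersenVertex, ((F i).filter (fun e => v ∈ e)).card
        ≤ ∑ _v : PetersenVertex, 2 :=
      Finset.sum_le_sum (fun v _ => by rcases hdeg02 i v with h' | h' <;> omega)
    rw [Finset.sum_const, smul_eq_mul, vert10] at hle
    omega
  -- number of cycles containing a given edge, as a Finset count
  have hcnt : ∀ e ∈ E, (Finset.univ.filter (fun i : Fin 9 => e ∈ F i)).card = 6 := by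
    intro e he
    have h := hcov e (SimpleGraph.mem_edgeFinset.mp he)
    have hset : {i : Fin 9 | e ∈ C i} = ↑(Finset.univ.filter (fun i : Fin 9 => e ∈ F i)) := by
      ext i; simp [hmemF]
    rwa [hset, Set.ncard_coe_finset] at h
  -- total count
  have htot : ∑ i : Fin 9, (F i).card = 90 := by
    have h1 : ∑ e ∈ E, (Finset.univ.filter (fun i : Fin 9 => e ∈ F i)).card
        = ∑ i : Fin 9, (F i).card := by
      calc ∑ e ∈ E, (Finset.univ.filter (fun i : Fin 9 => e ∈ F i)).card
          = ∑ e ∈ E, ∑ i : Fin 9, if e ∈ F i then 1 else 0 :=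
            Finset.sum_congr rfl (fun e _ => Finset.card_filter _ _)
        _ = ∑ i : Fin 9, ∑ e ∈ E, if e ∈ F i then 1 else 0 := Finset.sum_comm
        _ = ∑ i : Fin 9, (E.filter (fun e => e ∈ F i)).card :=
            Finset.sum_congr rfl (fun i _ => (Finset.card_filter _ _).symm)
        _ = ∑ i : Fin 9, (F i).card := by
            refine Finset.sum_congr rfl (fun i _ => ?_)
            rw [Finset.filter_mem_eq_inter, Finset.inter_eq_right.mpr (hFsub i)]
    rw [← h1, Finset.sum_congr rfl hcnt, Finset.sum_const, smul_eq_mul, edge15]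
  have hF10 : ∀ i, (F i).card = 10 := by
    by_contra hcon
    push_neg at hcon
    obtain ⟨i0, hi0⟩ := hcon
    have : ∑ i : Fin 9, (F i).card < ∑ _i : Fin 9, 10 :=
      Finset.sum_lt_sum (fun i _ => hcard10 i)
        ⟨i0, Finset.mem_univ i0, lt_of_le_of_ne (hcard10 i0) hi0⟩
    have h9 : (Finset.univ : Finset (Fin 9)).card = 9 := by simp
    rw [Finset.sum_const, smul_eq_mul, h9, htot] at this
    omega
  -- hence every vertex has exactly degree 2 in each cycle
  have hdeg2 : ∀ i v, ((F i).filter (fun e => v ∈ e)).card = 2 := by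
    intro i
    by_contra hcon
    push_neg at hcon
    obtain ⟨v0, hv0⟩ := hcon
    have h := handshake (F i) (hFsub i)
    rw [hF10 i] at h
    have : ∑ v : PetersenVertex, ((F i).filter (fun e => v ∈ e)).card
        < ∑ _v : PetersenVertex, 2 :=
      Finset.sum_lt_sum (fun v _ => by rcases hdeg02 i v with h' | h' <;> omega)
        ⟨v0, Finset.mem_univ v0,
          lt_of_le_of_ne (by rcases hdeg02 i v0 with h' | h' <;> omega) hv0⟩
    rw [Finset.sum_const, smul_eq_mul, vert10, h] at this
    omega
  -- the complements are perfect matchings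
  set D : Fin 9 → Finset (Sym2 PetersenVertex) := fun i => E \ F i with hDdef
  have hDsub : ∀ i, D i ⊆ E := fun i => Finset.sdiff_subset
  have hDdeg : ∀ i v, ((D i).filter (fun e => v ∈ e)).card = 1 := by
    intro i v
    have hun : (F i).filter (fun e => v ∈ e) ∪ (D i).filter (fun e => v ∈ e)
        = E.filter (fun e => v ∈ e) := by
      rw [← Finset.filter_union, Finset.union_sdiff_of_subset (hFsub i)]
    have hdis : Disjoint ((F i).filter (fun e => v ∈ e)) ((D i).filter (fun e => v ∈ e)) :=
      Finset.disjoint_filter_filter Finset.disjoint_sdiff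
    have := Finset.card_union_of_disjoint hdis
    rw [hun, deg3 v, hdeg2 i v] at this
    omega
  have hDPM : ∀ i, ∃ k : Fin 6, D i = M k := fun i => classify (D i) (hDsub i) (hDdeg i)
  have hD5 : ∀ i, (D i).card = 5 := by
    intro i
    have h := Finset.card_sdiff_of_subset (hFsub i)
    rw [hF10 i, edge15] at h
    exact h
  -- every edge lies in exactly 3 of the matchings
  have hmul : ∀ e ∈ E, (Finset.univ.filter (fun i : Fin 9 => e ∈ D i)).card = 3 := by
    intro e he
    have h6 := hcnt e he
    have hflt : Finset.univ.filter (fun i : Fin 9 => e ∈ D i)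
        = Finset.univ.filter (fun i : Fin 9 => ¬ e ∈ F i) := by
      refine Finset.filter_congr (fun i _ => ?_)
      simp [hDdef, Finset.mem_sdiff, he]
    rw [hflt, Finset.filter_not, Finset.card_sdiff_of_subset (Finset.filter_subset _ _), h6]
    simp
  -- double counting of pairs
  set P : Finset (Fin 9 × Fin 9) := (Finset.univ : Finset (Fin 9)).offDiag with hPdef
  have hScount : ∑ p ∈ P, ((D p.1) ∩ (D p.2)).card = 90 := by
    have hterm : ∀ p ∈ P, ((D p.1) ∩ (D p.2)).card
        = ∑ e ∈ E, if e ∈ D p.1 ∧ e ∈ D p.2 then 1 else 0 := by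
      intro p _
      rw [← Finset.card_filter]
      congr 1
      ext e
      simp only [Finset.mem_filter, Finset.mem_inter]
      exact ⟨fun h => ⟨hDsub p.1 h.1, h⟩, And.right⟩
    rw [Finset.sum_congr rfl hterm, Finset.sum_comm]
    have hinner : ∀ e ∈ E, (∑ p ∈ P, if e ∈ D p.1 ∧ e ∈ D p.2 then 1 else 0) = 6 := by
      intro e he
      rw [← Finset.card_filter]
      have : P.filter (fun p => e ∈ D p.1 ∧ e ∈ D p.2)
          = (Finset.univ.filter (fun i : Fin 9 => e ∈ D i)).offDiag := by
        ext p
        simp only [Finset.mem_filter, Finset.mem_offDiag, hPdef, Finset.mem_univ, true_and]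
        tauto
      rw [this, Finset.offDiag_card, hmul e he]
    rw [Finset.sum_congr rfl hinner, Finset.sum_const, smul_eq_mul, edge15]
  -- evaluate the sum using the structure of the matchings
  have hsplit := Finset.sum_filter_add_sum_filter_not P (fun p => D p.1 = D p.2)
      (fun p => ((D p.1) ∩ (D p.2)).card)
  set t := (P.filter (fun p => D p.1 = D p.2)).card with htd
  have hPcard : P.card = 72 := by
    rw [hPdef, Finset.offDiag_card, Finset.card_univ, Fintype.card_fin]
  have hEq : ∑ p ∈ P.filter (fun p => D p.1 = D p.2), ((D p.1) ∩ (D p.2)).card = 5 * t := by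
    have h5 : ∀ p ∈ P.filter (fun p => D p.1 = D p.2), ((D p.1) ∩ (D p.2)).card = 5 := by
      intro p hp
      rcases Finset.mem_filter.mp hp with ⟨_, heq⟩
      rw [heq, Finset.inter_self]
      exact hD5 p.2
    rw [Finset.sum_congr rfl h5, Finset.sum_const, smul_eq_mul, mul_comm, htd]
  have hNe : ∑ p ∈ P.filter (fun p => ¬ D p.1 = D p.2), ((D p.1) ∩ (D p.2)).card
      = P.card - t := by
    have h1 : ∀ p ∈ P.filter (fun p => ¬ D p.1 = D p.2), ((D p.1) ∩ (D p.2)).card = 1 := by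
      intro p hp
      rcases Finset.mem_filter.mp hp with ⟨_, hne⟩
      obtain ⟨k1, hk1⟩ := hDPM p.1
      obtain ⟨k2, hk2⟩ := hDPM p.2
      rw [hk1, hk2]
      rcases M_inter k1 k2 with h | h
      · exact absurd (hk1.trans (h.trans hk2.symm)) hne
      · exact h
    rw [Finset.sum_congr rfl h1, Finset.sum_const, smul_eq_mul, mul_one,
      Finset.filter_not, Finset.card_sdiff_of_subset (Finset.filter_subset _ _), htd]
  have ht : t ≤ 72 := by
    rw [← hPcard]
    exact Finset.card_le_card (Finset.filter_subset _ _)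
  rw [hEq, hNe, hPcard, hScount] at hsplit
  omega
end

section
/- Given an o6c4c solution of a cubic graph, if a second o6c4c solution is obtained from it by reorienting some of the circuits, then the two solutions have the same parity of the number of ordered vertices. -/
/-- An oriented cycle (oriented even subgraph) of `G`, encoded as a
divergence-free skew-symmetric flow with values in `{-1, 0, 1}` supported
on edges of `G`. -/
def IsOrientedCycle {V : Type*} [Fintype V] (G : SimpleGraph V)
    (f : V → V → ℤ) : Prop :=
  (∀ u v, f u v = - f v u) ∧
  (∀ u v, f u v ≠ 0 → G.Adj u v) ∧
  (∀ u v, f u v = 0 ∨ f u v = 1 ∨ f u v = -1) ∧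
  (∀ v, ∑ w, f v w = 0)

/-- An oriented 6-cycle 4-cover: 6 oriented even subgraphs such that every
edge is covered exactly 4 times, twice in each direction. -/
def IsO6c4c {V : Type*} [Fintype V] (G : SimpleGraph V)
    (f : Fin 6 → V → V → ℤ) : Prop :=
  (∀ i, IsOrientedCycle G (f i)) ∧
  (∀ u v, G.Adj u v →
    Set.ncard {i : Fin 6 | f i u v = 1} = 2 ∧
    Set.ncard {i : Fin 6 | f i u v = -1} = 2)

/-- A vertex `v` is *ordered* in an o6c4c if for every pair of incident
edges, the two cycle-transitions through that pair of edges traverse it in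
the same direction (no pair of edges is traversed in opposite directions). -/
def OrderedVertex {V : Type*} [Fintype V] (f : Fin 6 → V → V → ℤ) (v : V) : Prop :=
  ∀ x y : V,
    ¬ ((∃ i, f i x v = 1 ∧ f i v y = 1) ∧ (∃ j, f j y v = 1 ∧ f j v x = 1))

/-!
At a vertex `v` with neighbours `x, y, z`, let `m a b` count the cycles passing through `v` from
`a` to `b`. Every cycle passes through `v` exactly once, so each row and each column of `m` sums
to `2`; with zero diagonal this forces `m x y = m y z = m z x = s` and `m y x = m z y = m x z =
2 - s`, and `v` is ordered iff `s` is even. For any linear order on the vertices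
`∑_{a < b} m a b ≡ s (mod 2)`, so modulo `2` the number of ordered vertices is `|V|` plus the
number of pairs (cycle, vertex) at which the cycle passes from a smaller to a larger neighbour.

Reorienting circuits turns such an ascending passage into a descending one and vice versa
exactly at the passages `u → v` that get reversed. Their number is
`∑_{(u, w)} #{i | f i u w = 1, g i u w = -1}`, and this summand is symmetric in `(u, w)`
because both covers traverse every edge twice in each direction; hence it is even.
-/

open Finset

theorem sum_sum_ite_lt_of_three {α M : Type*} [LinearOrder α] [AddCommMonoid M] {x y z : α}
    (hxy : x ≠ y) (hxz : x ≠ z) (hyz : y ≠ z) (t : M) :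
    ∑ a ∈ {x, y, z}, ∑ b ∈ {x, y, z}, (if a < b then t else 0) = 3 • t := by
  rcases hxy.lt_or_gt with h1 | h1 <;> rcases hxz.lt_or_gt with h2 | h2 <;>
    rcases hyz.lt_or_gt with h3 | h3 <;>
    simp [sum_insert, hxy, hxz, hyz, h1, h2, h3, h1.not_gt, h2.not_gt, h3.not_gt] <;> abel

theorem sum_sum_eq_zero_of_symm {ι R : Type*} [Fintype ι] [Semiring R] [CharP R 2]
    (c : ι → ι → R) (hsymm : ∀ u w, c u w = c w u) (hdiag : ∀ u, c u u = 0) :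
    ∑ u, ∑ w, c u w = 0 := by
  rw [← Fintype.sum_prod_type']
  refine sum_ninvolution Prod.swap (fun p => ?_) (fun p hp hswap => hp ?_) (fun _ => mem_univ _)
    Prod.swap_swap
  · rw [Prod.fst_swap, Prod.snd_swap, hsymm, CharTwo.add_self_eq_zero]
  · have : p.2 = p.1 := congrArg Prod.fst hswap
    rw [this]
    exact hdiag _

def AscendsAt {V : Type*} [LT V] (c : V → V → ℤ) (v : V) : Prop :=
  ∃ a b, a < b ∧ c a v = 1 ∧ c v b = 1

section Ascent

variable {V : Type*} [LinearOrder V] {c : V → V → ℤ} {v a b : V}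

theorem ascendsAt_iff (ha : ∀ u, c u v = 1 ↔ u = a) (hb : ∀ u, c v u = 1 ↔ u = b) :
    AscendsAt c v ↔ a < b := by
  simp [AscendsAt, ha, hb]

open scoped Classical in
theorem sum_ite_transit_eq_ite_ascendsAt [Fintype V] (ha : ∀ u, c u v = 1 ↔ u = a)
    (hb : ∀ u, c v u = 1 ↔ u = b) :
    ∑ a', ∑ b', (if a' < b' ∧ c a' v = 1 ∧ c v b' = 1 then (1 : ZMod 2) else 0) =
      if AscendsAt c v then 1 else 0 := by
  simp only [ascendsAt_iff ha hb, ha, hb]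
  rw [sum_eq_single a (fun x _ hx => sum_eq_zero fun y _ => if_neg fun h => hx h.2.1) (by simp),
    sum_eq_single b (fun y _ hy => if_neg fun h => hy h.2.2) (by simp)]
  simp

end Ascent

section Cover

variable {V : Type*} [Fintype V] {G : SimpleGraph V}

namespace IsOrientedCycle

variable {c d : V → V → ℤ}

theorem adj_of_eq_one (hc : IsOrientedCycle G c) {u w : V} (h : c u w = 1) : G.Adj u w :=
  hc.2.1 u w (by simp [h])

theorem card_in_eq_card_out (hc : IsOrientedCycle G c) (v : V) :
    #{a | c a v = 1} = #{b | c v b = 1} := by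
  have hsplit : ∀ w, c v w = (if c v w = 1 then 1 else 0) - (if c w v = 1 then 1 else 0) := by
    intro w
    have := hc.1 v w
    rcases hc.2.2.1 v w with h | h | h <;> split_ifs <;> omega
  have hdiv := hc.2.2.2 v
  rw [sum_congr rfl fun w _ => hsplit w, sum_sub_distrib, sum_boole, sum_boole] at hdiv
  omega

theorem card_in_le_one [DecidableRel G.Adj] (hc : IsOrientedCycle G c) {v : V}
    (hv : G.degree v ≤ 3) : #{a | c a v = 1} ≤ 1 := by
  classical
  set inn := univ.filter fun a => c a v = 1
  set out := univ.filter fun b => c v b = 1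
  have hsub : inn ∪ out ⊆ G.neighborFinset v := by
    intro w
    simp only [inn, out, mem_union, mem_filter, mem_univ, true_and, SimpleGraph.mem_neighborFinset]
    rintro (h | h)
    · exact (hc.adj_of_eq_one h).symm
    · exact hc.adj_of_eq_one h
  have hdisj : Disjoint inn out := by
    refine disjoint_filter.2 fun w _ h1 h2 => ?_
    have := hc.1 w v
    omega
  have hio : #inn = #out := hc.card_in_eq_card_out v
  have := card_le_card hsub
  rw [card_union_of_disjoint hdisj, SimpleGraph.card_neighborFinset_eq_degree] at this
  omega

theorem transit_eq_or_swap (hc : IsOrientedCycle G c)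
    (hsame : ∀ u w, d u w = c u w ∨ d u w = -c u w) {v a b a' b' : V}
    (ha : ∀ u, c u v = 1 ↔ u = a) (hb : ∀ u, c v u = 1 ↔ u = b)
    (ha' : d a' v = 1) (hb' : d v b' = 1) (hab' : a' ≠ b') :
    (a' = a ∧ b' = b) ∨ (a' = b ∧ b' = a) := by
  have hin : a' = a ∨ a' = b := by
    rcases hsame a' v with h | h
    · exact Or.inl ((ha a').1 (by omega))
    · exact Or.inr ((hb a').1 (by have := hc.1 v a'; omega))
  have hout : b' = b ∨ b' = a := by
    rcases hsame v b' with h | h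
    · exact Or.inl ((hb b').1 (by omega))
    · exact Or.inr ((ha b').1 (by have := hc.1 b' v; omega))
  rcases hin with rfl | rfl <;> rcases hout with rfl | rfl <;> simp_all

open scoped Classical in
theorem ite_ascendsAt_add_ite_ascendsAt [LinearOrder V] (hc : IsOrientedCycle G c)
    (hd : IsOrientedCycle G d) (hsame : ∀ u w, d u w = c u w ∨ d u w = -c u w) {v a b a' b' : V}
    (ha : ∀ u, c u v = 1 ↔ u = a) (hb : ∀ u, c v u = 1 ↔ u = b)
    (ha' : ∀ u, d u v = 1 ↔ u = a') (hb' : ∀ u, d v u = 1 ↔ u = b') :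
    (if AscendsAt c v then 1 else 0 : ZMod 2) + (if AscendsAt d v then 1 else 0) =
      ∑ u, if c u v = 1 ∧ d u v = -1 then 1 else 0 := by
  have hab : a ≠ b := by
    rintro rfl
    have := hc.1 a v
    have := (ha a).2 rfl
    have := (hb a).2 rfl
    omega
  have hab' : a' ≠ b' := by
    rintro rfl
    have := hd.1 a' v
    have := (ha' a').2 rfl
    have := (hb' a').2 rfl
    omega
  rw [ascendsAt_iff ha hb, ascendsAt_iff ha' hb']
  simp only [ha]
  rw [sum_eq_single a (fun u _ hu => if_neg fun h => hu h.1) (by simp)]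
  simp only [true_and]
  rcases hc.transit_eq_or_swap hsame ha hb ((ha' a').2 rfl) ((hb' b').2 rfl) hab' with
    ⟨rfl, rfl⟩ | ⟨rfl, rfl⟩
  · rw [if_neg (show ¬d a' v = -1 by have := (ha' a').2 rfl; omega), CharTwo.add_self_eq_zero]
  · rw [if_pos (show d b' v = -1 by have := hd.1 b' v; have := (hb' b').2 rfl; omega)]
    rcases hab.lt_or_gt with hlt | hlt <;> simp [hlt, hlt.not_gt]

end IsOrientedCycle

def transitCount (h : Fin 6 → V → V → ℤ) (v a b : V) : ℕ :=
  #{i | h i a v = 1 ∧ h i v b = 1}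

theorem orderedVertex_iff_transitCount {h : Fin 6 → V → V → ℤ} {v : V} :
    OrderedVertex h v ↔ ∀ a b, ¬(0 < transitCount h v a b ∧ 0 < transitCount h v b a) := by
  simp [OrderedVertex, transitCount, card_pos, filter_nonempty_iff]

namespace IsO6c4c

variable {h f g : Fin 6 → V → V → ℤ}

theorem card_forward_eq_two (hh : IsO6c4c G h) {u w : V} (huw : G.Adj u w) :
    #{i | h i u w = 1} = 2 := by
  simpa [Set.ncard_eq_toFinset_card'] using (hh.2 u w huw).1

theorem card_backward_eq_two (hh : IsO6c4c G h) {u w : V} (huw : G.Adj u w) :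
    #{i | h i u w = -1} = 2 := by
  simpa [Set.ncard_eq_toFinset_card'] using (hh.2 u w huw).2

theorem sum_apply_eq_zero (hh : IsO6c4c G h) (u w : V) : ∑ i, h i u w = 0 := by
  by_cases huw : G.Adj u w
  · have hsplit : ∀ i,
        h i u w = (if h i u w = 1 then 1 else 0) - (if h i u w = -1 then 1 else 0) := by
      intro i
      rcases (hh.1 i).2.2.1 u w with h0 | h0 | h0 <;> simp [h0]
    rw [sum_congr rfl fun i _ => hsplit i, sum_sub_distrib, sum_boole, sum_boole,
      hh.card_forward_eq_two huw, hh.card_backward_eq_two huw, sub_self]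
  · exact sum_eq_zero fun i _ => not_not.1 fun hi => huw ((hh.1 i).2.1 u w hi)

theorem card_reversed_comm (hf : IsO6c4c G f) (hg : IsO6c4c G g)
    (hsame : ∀ i u w, g i u w = f i u w ∨ g i u w = -f i u w) (u w : V) :
    #{i | f i u w = 1 ∧ g i u w = -1} = #{i | f i w u = 1 ∧ g i w u = -1} := by
  have hpt : ∀ i, f i u w - g i u w =
      2 * ((if f i u w = 1 ∧ g i u w = -1 then 1 else 0) -
        (if f i w u = 1 ∧ g i w u = -1 then 1 else 0)) := by
    intro i
    have := (hf.1 i).1 w u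
    have := (hg.1 i).1 w u
    rcases (hf.1 i).2.2.1 u w with h0 | h0 | h0 <;> rcases hsame i u w with h1 | h1 <;>
      split_ifs <;> omega
  have hsum : ∑ i, (f i u w - g i u w) = 0 := by
    rw [sum_sub_distrib, hf.sum_apply_eq_zero, hg.sum_apply_eq_zero, sub_zero]
  rw [sum_congr rfl fun i _ => hpt i, ← mul_sum, sum_sub_distrib, sum_boole, sum_boole] at hsum
  omega

theorem adj_of_transitCount_pos (hh : IsO6c4c G h) {v a b : V}
    (hpos : 0 < transitCount h v a b) : G.Adj v a ∧ G.Adj v b ∧ a ≠ b := by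
  obtain ⟨i, hi⟩ := card_pos.1 hpos
  simp only [mem_filter, mem_univ, true_and] at hi
  refine ⟨((hh.1 i).adj_of_eq_one hi.1).symm, (hh.1 i).adj_of_eq_one hi.2, ?_⟩
  rintro rfl
  have := (hh.1 i).1 a v
  omega

theorem transitCount_self (hh : IsO6c4c G h) (v a : V) : transitCount h v a a = 0 :=
  Nat.eq_zero_of_not_pos fun hpos => (hh.adj_of_transitCount_pos hpos).2.2 rfl

section Regular

variable [DecidableRel G.Adj]

theorem card_in_eq_one (hh : IsO6c4c G h) (hG : G.IsRegularOfDegree 3) (i : Fin 6) (v : V) :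
    #{a | h i a v = 1} = 1 := by
  have hle : ∀ j ∈ univ, #{a | h j a v = 1} ≤ 1 :=
    fun j _ => (hh.1 j).card_in_le_one (hG v).le
  -- each of the three edges at `v` enters `v` in exactly two cycles: six entries, at most one
  -- per cycle
  have hsum : ∑ j, #{a | h j a v = 1} = ∑ _j : Fin 6, 1 := by
    calc ∑ j, #{a | h j a v = 1} = ∑ a, #{j | h j a v = 1} :=
          sum_card_bipartiteAbove_eq_sum_card_bipartiteBelow _
      _ = ∑ a ∈ G.neighborFinset v, 2 := by
          refine (sum_subset (subset_univ _) fun a _ ha => ?_).symm.trans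
            (sum_congr rfl fun a ha =>
              hh.card_forward_eq_two ((G.mem_neighborFinset v a).1 ha).symm)
          rw [card_eq_zero, filter_eq_empty_iff]
          exact fun j _ hj => ha ((G.mem_neighborFinset v a).2 ((hh.1 j).adj_of_eq_one hj).symm)
      _ = ∑ _j : Fin 6, 1 := by simp [hG v]
  exact (sum_eq_sum_iff_of_le hle).1 hsum i (mem_univ i)

theorem exists_in_iff (hh : IsO6c4c G h) (hG : G.IsRegularOfDegree 3) (i : Fin 6) (v : V) :
    ∃ a, ∀ u, h i u v = 1 ↔ u = a := by
  obtain ⟨a, ha⟩ := Finset.card_eq_one.1 (hh.card_in_eq_one hG i v)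
  exact ⟨a, fun u => by simpa using Finset.ext_iff.1 ha u⟩

theorem exists_out_iff (hh : IsO6c4c G h) (hG : G.IsRegularOfDegree 3) (i : Fin 6) (v : V) :
    ∃ b, ∀ u, h i v u = 1 ↔ u = b := by
  obtain ⟨b, hb⟩ :=
    Finset.card_eq_one.1 ((hh.1 i).card_in_eq_card_out v ▸ hh.card_in_eq_one hG i v)
  exact ⟨b, fun u => by simpa using Finset.ext_iff.1 hb u⟩

theorem sum_transitCount_right (hh : IsO6c4c G h) (hG : G.IsRegularOfDegree 3) (v a : V) :
    ∑ b, transitCount h v a b = #{i | h i a v = 1} := by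
  calc ∑ b, transitCount h v a b = ∑ i, #{b | h i a v = 1 ∧ h i v b = 1} :=
        (sum_card_bipartiteAbove_eq_sum_card_bipartiteBelow _).symm
    _ = ∑ i, if h i a v = 1 then 1 else 0 := sum_congr rfl fun i _ => by
        obtain ⟨b, hb⟩ := hh.exists_out_iff hG i v
        split_ifs with hi
        · exact card_eq_one.2 ⟨b, by ext; simp [hi, hb]⟩
        · exact card_eq_zero.2 (by ext; simp [hi])
    _ = #{i | h i a v = 1} := (card_filter _ _).symm

theorem sum_transitCount_left (hh : IsO6c4c G h) (hG : G.IsRegularOfDegree 3) (v b : V) :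
    ∑ a, transitCount h v a b = #{i | h i v b = 1} := by
  calc ∑ a, transitCount h v a b = ∑ i, #{a | h i a v = 1 ∧ h i v b = 1} :=
        (sum_card_bipartiteAbove_eq_sum_card_bipartiteBelow _).symm
    _ = ∑ i, if h i v b = 1 then 1 else 0 := sum_congr rfl fun i _ => by
        obtain ⟨a, ha⟩ := hh.exists_in_iff hG i v
        split_ifs with hi
        · exact card_eq_one.2 ⟨a, by ext; simp [hi, ha]⟩
        · exact card_eq_zero.2 (by ext; simp [hi])
    _ = #{i | h i v b = 1} := (card_filter _ _).symm

theorem transitCount_eq_zero_of_not_mem_left (hh : IsO6c4c G h) {v a : V}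
    (ha : a ∉ G.neighborFinset v) (b : V) : transitCount h v a b = 0 :=
  Nat.eq_zero_of_not_pos fun hpos =>
    ha ((G.mem_neighborFinset v a).2 (hh.adj_of_transitCount_pos hpos).1)

theorem transitCount_eq_zero_of_not_mem_right (hh : IsO6c4c G h) {v b : V}
    (hb : b ∉ G.neighborFinset v) (a : V) : transitCount h v a b = 0 :=
  Nat.eq_zero_of_not_pos fun hpos =>
    hb ((G.mem_neighborFinset v b).2 (hh.adj_of_transitCount_pos hpos).2.1)

open scoped Classical in
theorem sum_ite_ascendsAt_eq_sum_transitCount [LinearOrder V] (hh : IsO6c4c G h)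
    (hG : G.IsRegularOfDegree 3) (v : V) :
    ∑ i, (if AscendsAt (h i) v then 1 else 0 : ZMod 2) =
      ∑ a, ∑ b, if a < b then (transitCount h v a b : ZMod 2) else 0 := by
  calc ∑ i, (if AscendsAt (h i) v then 1 else 0 : ZMod 2)
      = ∑ i, ∑ a, ∑ b, (if a < b ∧ h i a v = 1 ∧ h i v b = 1 then 1 else 0) :=
        sum_congr rfl fun i _ => by
          obtain ⟨a, ha⟩ := hh.exists_in_iff hG i v
          obtain ⟨b, hb⟩ := hh.exists_out_iff hG i v
          exact (sum_ite_transit_eq_ite_ascendsAt ha hb).symm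
    _ = ∑ a, ∑ b, if a < b then (transitCount h v a b : ZMod 2) else 0 := by
        rw [sum_comm]
        refine sum_congr rfl fun a _ => ?_
        rw [sum_comm]
        refine sum_congr rfl fun b _ => ?_
        split_ifs with hab <;> simp [transitCount, hab]

/-- The row and column sums of the matrix of transition counts at `v` are all `2` and its
diagonal vanishes, so it is `!![0, s, 2 - s; 2 - s, 0, s; s, 2 - s, 0]` in the basis `x, y, z`. -/
theorem transitCount_add_swap_and_mod_two [DecidableEq V] (hh : IsO6c4c G h)
    (hG : G.IsRegularOfDegree 3) {v x y z : V} (hN : G.neighborFinset v = {x, y, z})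
    (hxy : x ≠ y) (hxz : x ≠ z) (hyz : y ≠ z) {a b : V} (ha : a ∈ G.neighborFinset v)
    (hb : b ∈ G.neighborFinset v) (hab : a ≠ b) :
    transitCount h v a b + transitCount h v b a = 2 ∧
      transitCount h v a b % 2 = transitCount h v x y % 2 := by
  have hrow : ∀ a ∈ G.neighborFinset v,
      transitCount h v a x + (transitCount h v a y + transitCount h v a z) = 2 := by
    intro a ha
    rw [← hh.card_forward_eq_two ((G.mem_neighborFinset v a).1 ha).symm,
      ← hh.sum_transitCount_right hG, ← sum_subset (subset_univ _)
        fun b _ hb => hh.transitCount_eq_zero_of_not_mem_right hb a, hN,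
      sum_insert (by simp [hxy, hxz]), sum_insert (by simp [hyz]), sum_singleton]
  have hcol : ∀ b ∈ G.neighborFinset v,
      transitCount h v x b + (transitCount h v y b + transitCount h v z b) = 2 := by
    intro b hb
    rw [← hh.card_forward_eq_two ((G.mem_neighborFinset v b).1 hb),
      ← hh.sum_transitCount_left hG, ← sum_subset (subset_univ _)
        fun a _ ha => hh.transitCount_eq_zero_of_not_mem_left ha b, hN,
      sum_insert (by simp [hxy, hxz]), sum_insert (by simp [hyz]), sum_singleton]
  have hx : x ∈ G.neighborFinset v := by simp [hN]
  have hy : y ∈ G.neighborFinset v := by simp [hN]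
  have hz : z ∈ G.neighborFinset v := by simp [hN]
  have := hrow x hx; have := hrow y hy; have := hrow z hz
  have := hcol x hx; have := hcol y hy; have := hcol z hz
  have := hh.transitCount_self v x; have := hh.transitCount_self v y
  have := hh.transitCount_self v z
  rw [hN] at ha hb
  simp only [mem_insert, mem_singleton] at ha hb
  rcases ha with rfl | rfl | rfl <;> rcases hb with rfl | rfl | rfl <;>
    first | exact absurd rfl hab | omega

theorem orderedVertex_iff_transitCount_mod_two [DecidableEq V] (hh : IsO6c4c G h)
    (hG : G.IsRegularOfDegree 3) {v x y z : V} (hN : G.neighborFinset v = {x, y, z})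
    (hxy : x ≠ y) (hxz : x ≠ z) (hyz : y ≠ z) :
    OrderedVertex h v ↔ transitCount h v x y % 2 = 0 := by
  have hx : x ∈ G.neighborFinset v := by simp [hN]
  have hy : y ∈ G.neighborFinset v := by simp [hN]
  rw [orderedVertex_iff_transitCount]
  constructor
  · intro hO
    have := (hh.transitCount_add_swap_and_mod_two hG hN hxy hxz hyz hx hy hxy).1
    by_contra hodd
    exact hO x y ⟨by omega, by omega⟩
  · rintro heven a b ⟨hab, hba⟩
    obtain ⟨ha, hb, hne⟩ := hh.adj_of_transitCount_pos hab
    have := hh.transitCount_add_swap_and_mod_two hG hN hxy hxz hyz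
      ((G.mem_neighborFinset v a).2 ha) ((G.mem_neighborFinset v b).2 hb) hne
    omega

theorem sum_ite_lt_transitCount [LinearOrder V] (hh : IsO6c4c G h) (hG : G.IsRegularOfDegree 3)
    {v x y z : V} (hN : G.neighborFinset v = {x, y, z}) (hxy : x ≠ y) (hxz : x ≠ z)
    (hyz : y ≠ z) :
    ∑ a, ∑ b, (if a < b then (transitCount h v a b : ZMod 2) else 0) =
      transitCount h v x y := by
  calc ∑ a, ∑ b, (if a < b then (transitCount h v a b : ZMod 2) else 0)
      = ∑ a ∈ {x, y, z}, ∑ b ∈ {x, y, z},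
          if a < b then (transitCount h v x y : ZMod 2) else 0 := by
        rw [← hN, ← sum_subset (subset_univ _) fun a _ ha =>
          sum_eq_zero fun b _ => by simp [hh.transitCount_eq_zero_of_not_mem_left (v := v) ha b]]
        refine sum_congr rfl fun a ha => ?_
        rw [← sum_subset (subset_univ _) fun b _ hb => by
          simp [hh.transitCount_eq_zero_of_not_mem_right (v := v) hb a]]
        refine sum_congr rfl fun b hb => ?_
        split_ifs with hab
        · exact (ZMod.natCast_eq_natCast_iff' _ _ 2).2
            (hh.transitCount_add_swap_and_mod_two hG hN hxy hxz hyz ha hb hab.ne).2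
        · rfl
    _ = transitCount h v x y := by
        rw [sum_sum_ite_lt_of_three hxy hxz hyz, nsmul_eq_mul,
          show ((3 : ℕ) : ZMod 2) = 1 from rfl, one_mul]

end Regular

open scoped Classical in
theorem ite_orderedVertex_eq [LinearOrder V] (hh : IsO6c4c G h) (hG : G.IsRegularOfDegree 3)
    (v : V) :
    (if OrderedVertex h v then 1 else 0 : ZMod 2) =
      1 + ∑ i, if AscendsAt (h i) v then 1 else 0 := by
  obtain ⟨x, y, z, hxy, hxz, hyz, hN⟩ :=
    card_eq_three.1 ((G.card_neighborFinset_eq_degree v).trans (hG v))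
  rw [hh.sum_ite_ascendsAt_eq_sum_transitCount hG, hh.sum_ite_lt_transitCount hG hN hxy hxz hyz,
    hh.orderedVertex_iff_transitCount_mod_two hG hN hxy hxz hyz, CharTwo.natCast_eq_mod]
  rcases Nat.mod_two_eq_zero_or_one (transitCount h v x y) with hs | hs
  · simp [hs]
  · simp [hs]
    rfl

open scoped Classical in
theorem natCast_ncard_orderedVertex [LinearOrder V] (hh : IsO6c4c G h)
    (hG : G.IsRegularOfDegree 3) :
    ({v | OrderedVertex h v}.ncard : ZMod 2) =
      ∑ v, (1 + ∑ i, if AscendsAt (h i) v then 1 else 0) := by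
  rw [← sum_congr rfl fun v _ => hh.ite_orderedVertex_eq hG v, sum_boole,
    Set.ncard_eq_toFinset_card']
  simp

open scoped Classical in
theorem sum_sum_ite_ascendsAt_add_eq_zero [LinearOrder V] (hf : IsO6c4c G f) (hg : IsO6c4c G g)
    (hG : G.IsRegularOfDegree 3) (hsame : ∀ i u w, g i u w = f i u w ∨ g i u w = -f i u w) :
    ∑ v, ∑ i, (if AscendsAt (f i) v then 1 else 0 : ZMod 2) +
      ∑ v, ∑ i, (if AscendsAt (g i) v then 1 else 0) = 0 := by
  calc _ = ∑ v, ∑ i, ∑ u, (if f i u v = 1 ∧ g i u v = -1 then 1 else 0 : ZMod 2) := by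
        rw [← sum_add_distrib]
        refine sum_congr rfl fun v _ => ?_
        rw [← sum_add_distrib]
        refine sum_congr rfl fun i _ => ?_
        obtain ⟨a, ha⟩ := hf.exists_in_iff hG i v
        obtain ⟨b, hb⟩ := hf.exists_out_iff hG i v
        obtain ⟨a', ha'⟩ := hg.exists_in_iff hG i v
        obtain ⟨b', hb'⟩ := hg.exists_out_iff hG i v
        exact (hf.1 i).ite_ascendsAt_add_ite_ascendsAt (hg.1 i) (hsame i) ha hb ha' hb'
    _ = ∑ v, ∑ u, ∑ i, (if f i u v = 1 ∧ g i u v = -1 then 1 else 0 : ZMod 2) :=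
        sum_congr rfl fun v _ => sum_comm
    _ = ∑ u, ∑ v, (#{i | f i u v = 1 ∧ g i u v = -1} : ZMod 2) := by
        rw [sum_comm]
        simp only [sum_boole]
    _ = 0 := by
        refine sum_sum_eq_zero_of_symm _ (fun u w => by rw [hf.card_reversed_comm hg hsame])
          fun u => ?_
        rw [card_eq_zero.2 (filter_eq_empty_iff.2 fun i _ hi => ?_), Nat.cast_zero]
        have := (hf.1 i).1 u u
        omega

end IsO6c4c

end Cover

/-- If one o6c4c of a cubic graph is obtained from another by reorienting
some of the circuits (i.e. the two o6c4cs have the same underlying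
unoriented cycles), then the numbers of ordered vertices of the two
solutions have the same parity. -/
theorem stmt9 {V : Type*} [Fintype V] (G : SimpleGraph V)
    (hcubic : ∀ v : V, (G.neighborSet v).ncard = 3)
    (f g : Fin 6 → V → V → ℤ)
    (hf : IsO6c4c G f) (hg : IsO6c4c G g)
    (hsame : ∀ i u v, g i u v = f i u v ∨ g i u v = - f i u v) :
    Set.ncard {v : V | OrderedVertex f v} % 2
      = Set.ncard {v : V | OrderedVertex g v} % 2 := by
  classical
  let : LinearOrder V := LinearOrder.lift' _ (Fintype.equivFin V).injective
  have hG : G.IsRegularOfDegree 3 := fun v => by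
    rw [← G.card_neighborFinset_eq_degree, ← Set.ncard_coe_finset, G.coe_neighborFinset]
    exact hcubic v
  rw [← ZMod.natCast_eq_natCast_iff', hf.natCast_ncard_orderedVertex hG,
    hg.natCast_ncard_orderedVertex hG, sum_add_distrib, sum_add_distrib,
    CharTwo.add_eq_zero.1 (hf.sum_sum_ite_ascendsAt_add_eq_zero hg hG hsame)]
end

section
/- In any oriented 6-cycle 4-cover of a cubic graph, the number of ordered vertices is never equal to 1. -/
def op (x : ℤ) : ℤ := x % 2 * x

lemma op_neg (x : ℤ) : op (-x) = - op x := by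
  unfold op; rw [Int.neg_emod_two]; ring

lemma pair_char' {X : Fin 6 → ℤ} {s : ℤ} (h : {k | X k = s}.ncard = 2) :
    ∃ p q, p ≠ q ∧ ∀ k, X k = s ↔ k = p ∨ k = q := by
  obtain ⟨p, q, hpq, hset⟩ := Set.ncard_eq_two.mp h
  refine ⟨p, q, hpq, fun k => ?_⟩
  have : X k = s ↔ k ∈ {k | X k = s} := Iff.rfl
  rw [this, hset]; simp

lemma pair_char {X : Fin 6 → ℤ} {s : ℤ} (h : {k | X k = s}.ncard = 2) {x : Fin 6}
    (hx : X x = s) : ∃ y, x ≠ y ∧ ∀ k, X k = s ↔ k = x ∨ k = y := by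
  obtain ⟨p, q, hpq, hch⟩ := pair_char' h
  rcases (hch x).mp hx with rfl | rfl
  · exact ⟨q, hpq, hch⟩
  · exact ⟨p, hpq.symm, fun k => by rw [hch k]; tauto⟩

lemma pair_char2 {X : Fin 6 → ℤ} {s : ℤ} (h : {k | X k = s}.ncard = 2) {x y : Fin 6}
    (hxy : x ≠ y) (hx : X x = s) (hy : X y = s) : ∀ k, X k = s ↔ k = x ∨ k = y := by
  obtain ⟨z, hxz, hch⟩ := pair_char h hx
  rcases (hch y).mp hy with rfl | rfl
  · exact absurd rfl hxy
  · exact hch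

lemma pigeon {t1 t2 t3 a b : Fin 6} (h12 : t1 ≠ t2) (h13 : t1 ≠ t3) (h23 : t2 ≠ t3)
    (p1 : t1 = a ∨ t1 = b) (p2 : t2 = a ∨ t2 = b) (p3 : t3 = a ∨ t3 = b) : False := by
  rcases p1 with rfl | rfl <;> rcases p2 with rfl | rfl <;> rcases p3 with rfl | rfl <;>
    simp_all

lemma zero_char {C : Fin 6 → ℤ}
    (hrC : ∀ k, C k = 0 ∨ C k = 1 ∨ C k = -1)
    (hC1 : {k | C k = 1}.ncard = 2) (hC2 : {k | C k = -1}.ncard = 2) :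
    {k | C k = 0}.ncard = 2 := by
  have hunion : {k | C k = 1} ∪ {k | C k = -1} = {k | C k = 0}ᶜ := by
    ext k
    simp only [Set.mem_union, Set.mem_setOf_eq, Set.mem_compl_iff]
    have := hrC k; omega
  have hdisj : Disjoint {k | (C k : ℤ) = 1} {k | C k = -1} :=
    Set.disjoint_left.mpr (by intro k h1 h2; simp only [Set.mem_setOf_eq] at h1 h2; omega)
  have h4 : ({k | C k = 1} ∪ {k | C k = -1}).ncard = 4 := by
    rw [Set.ncard_union_eq hdisj (Set.toFinite _) (Set.toFinite _), hC1, hC2]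
  have h6 : ({k | C k = 0}).ncard + ({k | C k = 0}ᶜ).ncard = 6 := by
    rw [Set.ncard_add_ncard_compl]; simp
  rw [← hunion] at h6
  omega


lemma op_small (w : ℤ) (h1 : -2 ≤ w) (h2 : w ≤ 2) :
    (op w = 0 ∧ (w = 0 ∨ w = 2 ∨ w = -2)) ∨ (op w = w ∧ (w = 1 ∨ w = -1)) := by
  rcases (by omega : w = -2 ∨ w = -1 ∨ w = 0 ∨ w = 1 ∨ w = 2) with rfl | rfl | rfl | rfl | rfl
  · exact Or.inl (by decide)
  · exact Or.inr (by decide)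
  · exact Or.inl (by decide)
  · exact Or.inr (by decide)
  · exact Or.inl (by decide)


section helpers
variable {A B C : Fin 6 → ℤ} {i j mA nA mB nB : Fin 6}

/-- pattern (1,1,-2), normalized so that `C t3 = 0`. -/
lemma helperC'
    (hrA : ∀ k, A k = 0 ∨ A k = 1 ∨ A k = -1)
    (hrB : ∀ k, B k = 0 ∨ B k = 1 ∨ B k = -1)
    (hrC : ∀ k, C k = 0 ∨ C k = 1 ∨ C k = -1)
    (hsum : ∀ k, A k + B k + C k = 0)
    (hApos : ∀ k, A k = 1 ↔ k = i ∨ k = mA)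
    (hAneg : ∀ k, A k = -1 ↔ k = j ∨ k = nA)
    (hBpos : ∀ k, B k = 1 ↔ k = j ∨ k = mB)
    (hC0 : ∀ k, C k = 0 ↔ k = i ∨ k = j)
    {t1 t2 t3 : Fin 6} (h12 : t1 ≠ t2) (h13 : t1 ≠ t3) (h23 : t2 ≠ t3)
    (hx : A t1 + A t2 + A t3 = 1) (hy : B t1 + B t2 + B t3 = 1)
    (hz : C t1 + C t2 + C t3 = -2) (h3 : C t3 = 0) : False := by
  have hAi : A i = 1 := (hApos i).mpr (Or.inl rfl)
  have hAj : A j = -1 := (hAneg j).mpr (Or.inl rfl)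
  have hc12 : C t1 = -1 ∧ C t2 = -1 := by
    have := hrC t1; have := hrC t2; omega
  have ht1 : ¬(t1 = i ∨ t1 = j) := fun h => by have := (hC0 t1).mpr h; omega
  have ht2 : ¬(t2 = i ∨ t2 = j) := fun h => by have := (hC0 t2).mpr h; omega
  have hd1 : (A t1 = 1 ∧ B t1 = 0) ∨ (A t1 = 0 ∧ B t1 = 1) := by
    have := hsum t1; have := hrA t1; have := hrB t1; omega
  have hd2 : (A t2 = 1 ∧ B t2 = 0) ∨ (A t2 = 0 ∧ B t2 = 1) := by
    have := hsum t2; have := hrA t2; have := hrB t2; omega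
  have hnA : ¬(A t1 = 1 ∧ A t2 = 1) := by
    rintro ⟨u1, u2⟩
    rcases (hApos t1).mp u1 with h | h
    · exact ht1 (Or.inl h)
    rcases (hApos t2).mp u2 with h' | h'
    · exact ht2 (Or.inl h')
    exact h12 (h.trans h'.symm)
  have hnB : ¬(B t1 = 1 ∧ B t2 = 1) := by
    rintro ⟨u1, u2⟩
    rcases (hBpos t1).mp u1 with h | h
    · exact ht1 (Or.inr h)
    rcases (hBpos t2).mp u2 with h' | h'
    · exact ht2 (Or.inr h')
    exact h12 (h.trans h'.symm)
  have hA3 : A t3 = 0 ∧ B t3 = 0 := by omega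
  rcases (hC0 t3).mp h3 with rfl | rfl
  · omega
  · omega

/-- pattern (1,1,-2), dispatch on which t has `C = 0`. -/
lemma helperC
    (hrA : ∀ k, A k = 0 ∨ A k = 1 ∨ A k = -1)
    (hrB : ∀ k, B k = 0 ∨ B k = 1 ∨ B k = -1)
    (hrC : ∀ k, C k = 0 ∨ C k = 1 ∨ C k = -1)
    (hsum : ∀ k, A k + B k + C k = 0)
    (hApos : ∀ k, A k = 1 ↔ k = i ∨ k = mA)
    (hAneg : ∀ k, A k = -1 ↔ k = j ∨ k = nA)
    (hBpos : ∀ k, B k = 1 ↔ k = j ∨ k = mB)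
    (hC0 : ∀ k, C k = 0 ↔ k = i ∨ k = j)
    {t1 t2 t3 : Fin 6} (h12 : t1 ≠ t2) (h13 : t1 ≠ t3) (h23 : t2 ≠ t3)
    (hx : A t1 + A t2 + A t3 = 1) (hy : B t1 + B t2 + B t3 = 1)
    (hz : C t1 + C t2 + C t3 = -2) : False := by
  have h0 : C t3 = 0 ∨ C t2 = 0 ∨ C t1 = 0 := by
    have := hrC t1; have := hrC t2; have := hrC t3; omega
  rcases h0 with h0 | h0 | h0
  · exact helperC' hrA hrB hrC hsum hApos hAneg hBpos hC0 h12 h13 h23 hx hy hz h0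
  · exact helperC' hrA hrB hrC hsum hApos hAneg hBpos hC0 h13 h12 h23.symm
      (by linarith) (by linarith) (by linarith) h0
  · exact helperC' hrA hrB hrC hsum hApos hAneg hBpos hC0 h23 h12.symm h13.symm
      (by linarith) (by linarith) (by linarith) h0

/-- pattern (-2,1,1), normalized: `t1 = j` and `A t3 = 0`. -/
lemma helperA''
    (hrA : ∀ k, A k = 0 ∨ A k = 1 ∨ A k = -1)
    (hrB : ∀ k, B k = 0 ∨ B k = 1 ∨ B k = -1)
    (hrC : ∀ k, C k = 0 ∨ C k = 1 ∨ C k = -1)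
    (hsum : ∀ k, A k + B k + C k = 0)
    (hApos : ∀ k, A k = 1 ↔ k = i ∨ k = mA)
    (hAneg : ∀ k, A k = -1 ↔ k = j ∨ k = nA)
    (hBpos : ∀ k, B k = 1 ↔ k = j ∨ k = mB)
    (hC0 : ∀ k, C k = 0 ↔ k = i ∨ k = j)
    {t2 t3 : Fin 6} (h12 : j ≠ t2) (h13 : j ≠ t3) (h23 : t2 ≠ t3)
    (hA2 : A t2 = -1) (hA3 : A t3 = 0)
    (hy : B j + B t2 + B t3 = 1) (hz : C j + C t2 + C t3 = 1) : False := by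
  have hAi : A i = 1 := (hApos i).mpr (Or.inl rfl)
  have hBj : B j = 1 := (hBpos j).mpr (Or.inl rfl)
  have hCj : C j = 0 := (hC0 j).mpr (Or.inr rfl)
  have ht2 : C t2 ≠ 0 := fun h => by
    rcases (hC0 t2).mp h with rfl | rfl
    · omega
    · exact h12 rfl
  have h2 : B t2 = 0 ∧ C t2 = 1 := by
    have := hsum t2; have := hrB t2; have := hrC t2; omega
  have h3 : C t3 = 0 := by omega
  rcases (hC0 t3).mp h3 with rfl | rfl
  · omega
  · exact h13 rfl

/-- pattern (-2,1,1), normalized: `A t3 = 0`. -/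
lemma helperA'
    (hrA : ∀ k, A k = 0 ∨ A k = 1 ∨ A k = -1)
    (hrB : ∀ k, B k = 0 ∨ B k = 1 ∨ B k = -1)
    (hrC : ∀ k, C k = 0 ∨ C k = 1 ∨ C k = -1)
    (hsum : ∀ k, A k + B k + C k = 0)
    (hApos : ∀ k, A k = 1 ↔ k = i ∨ k = mA)
    (hAneg : ∀ k, A k = -1 ↔ k = j ∨ k = nA)
    (hBpos : ∀ k, B k = 1 ↔ k = j ∨ k = mB)
    (hC0 : ∀ k, C k = 0 ↔ k = i ∨ k = j)
    {t1 t2 t3 : Fin 6} (h12 : t1 ≠ t2) (h13 : t1 ≠ t3) (h23 : t2 ≠ t3)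
    (hx : A t1 + A t2 + A t3 = -2) (hy : B t1 + B t2 + B t3 = 1)
    (hz : C t1 + C t2 + C t3 = 1) (h3 : A t3 = 0) : False := by
  have h12' : A t1 = -1 ∧ A t2 = -1 := by
    have := hrA t1; have := hrA t2; omega
  have ht : t1 = j ∨ t2 = j := by
    rcases (hAneg t1).mp h12'.1 with h | h
    · exact Or.inl h
    rcases (hAneg t2).mp h12'.2 with h' | h'
    · exact Or.inr h'
    exact absurd (h.trans h'.symm) h12
  rcases ht with rfl | rfl
  · exact helperA'' hrA hrB hrC hsum hApos hAneg hBpos hC0 h12 h13 h23 h12'.2 h3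
      hy hz
  · exact helperA'' hrA hrB hrC hsum hApos hAneg hBpos hC0 (Ne.symm h12) h23 h13
      h12'.1 h3 (by linarith) (by linarith)

/-- pattern (-2,1,1). -/
lemma helperA
    (hrA : ∀ k, A k = 0 ∨ A k = 1 ∨ A k = -1)
    (hrB : ∀ k, B k = 0 ∨ B k = 1 ∨ B k = -1)
    (hrC : ∀ k, C k = 0 ∨ C k = 1 ∨ C k = -1)
    (hsum : ∀ k, A k + B k + C k = 0)
    (hApos : ∀ k, A k = 1 ↔ k = i ∨ k = mA)
    (hAneg : ∀ k, A k = -1 ↔ k = j ∨ k = nA)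
    (hBpos : ∀ k, B k = 1 ↔ k = j ∨ k = mB)
    (hC0 : ∀ k, C k = 0 ↔ k = i ∨ k = j)
    {t1 t2 t3 : Fin 6} (h12 : t1 ≠ t2) (h13 : t1 ≠ t3) (h23 : t2 ≠ t3)
    (hx : A t1 + A t2 + A t3 = -2) (hy : B t1 + B t2 + B t3 = 1)
    (hz : C t1 + C t2 + C t3 = 1) : False := by
  have h0 : A t3 = 0 ∨ A t2 = 0 ∨ A t1 = 0 := by
    have := hrA t1; have := hrA t2; have := hrA t3; omega
  rcases h0 with h0 | h0 | h0
  · exact helperA' hrA hrB hrC hsum hApos hAneg hBpos hC0 h12 h13 h23 hx hy hz h0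
  · exact helperA' hrA hrB hrC hsum hApos hAneg hBpos hC0 h13 h12 h23.symm
      (by linarith) (by linarith) (by linarith) h0
  · exact helperA' hrA hrB hrC hsum hApos hAneg hBpos hC0 h23 h12.symm h13.symm
      (by linarith) (by linarith) (by linarith) h0

end helpers

section
variable {A B C : Fin 6 → ℤ} {i j mA nA mB nB : Fin 6}
lemma neg1 {x : ℤ} : -x = 1 ↔ x = -1 := by omega
lemma neg2 {x : ℤ} : -x = -1 ↔ x = 1 := by omega
lemma neg0 {x : ℤ} : -x = 0 ↔ x = 0 := by omega
lemma negr {x : ℤ} (h : x = 0 ∨ x = 1 ∨ x = -1) : -x = 0 ∨ -x = 1 ∨ -x = -1 := by omega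
lemma bound3 {a b c : ℤ} (ra : a = 0 ∨ a = 1 ∨ a = -1) (rb : b = 0 ∨ b = 1 ∨ b = -1)
    (rc : c = 0 ∨ c = 1 ∨ c = -1)
    (n1 : ¬(a = 1 ∧ b = 1 ∧ c = 1)) (n2 : ¬(a = -1 ∧ b = -1 ∧ c = -1)) :
    -2 ≤ a + b + c ∧ a + b + c ≤ 2 := by omega
set_option maxHeartbeats 1000000 in
lemma case6 {x y z ox oy oz : ℤ} (hxyz : x + y + z = 0)
    (o1 : (ox = 0 ∧ (x = 0 ∨ x = 2 ∨ x = -2)) ∨ (ox = x ∧ (x = 1 ∨ x = -1)))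
    (o2 : (oy = 0 ∧ (y = 0 ∨ y = 2 ∨ y = -2)) ∨ (oy = y ∧ (y = 1 ∨ y = -1)))
    (o3 : (oz = 0 ∧ (z = 0 ∨ z = 2 ∨ z = -2)) ∨ (oz = z ∧ (z = 1 ∨ z = -1)))
    (hne : ox + oy + oz ≠ 0) :
    (x = 1 ∧ y = 1 ∧ z = -2) ∨
    (x = -2 ∧ y = 1 ∧ z = 1) ∨
    (x = 1 ∧ y = -2 ∧ z = 1) ∨
    (x = -1 ∧ y = -1 ∧ z = 2) ∨
    (x = 2 ∧ y = -1 ∧ z = -1) ∨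
    (x = -1 ∧ y = 2 ∧ z = -1) := by
  have ex : x = -2 ∨ x = -1 ∨ x = 0 ∨ x = 1 ∨ x = 2 := by omega
  have ey : y = -2 ∨ y = -1 ∨ y = 0 ∨ y = 1 ∨ y = 2 := by omega
  rcases ex with rfl|rfl|rfl|rfl|rfl <;> rcases ey with rfl|rfl|rfl|rfl|rfl <;>
    first | (exfalso; omega) | (norm_num; omega)

lemma core_disordered
    (hrA : ∀ k, A k = 0 ∨ A k = 1 ∨ A k = -1)
    (hrB : ∀ k, B k = 0 ∨ B k = 1 ∨ B k = -1)
    (hrC : ∀ k, C k = 0 ∨ C k = 1 ∨ C k = -1)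
    (hsum : ∀ k, A k + B k + C k = 0)
    (hA1 : {k | A k = 1}.ncard = 2) (hA2 : {k | A k = -1}.ncard = 2)
    (hB1 : {k | B k = 1}.ncard = 2) (hB2 : {k | B k = -1}.ncard = 2)
    (hC1 : {k | C k = 1}.ncard = 2) (hC2 : {k | C k = -1}.ncard = 2)
    {i j : Fin 6} (hiA : A i = 1) (hiB : B i = -1) (hjA : A j = -1) (hjB : B j = 1)
    {t1 t2 t3 : Fin 6} (h12 : t1 ≠ t2) (h13 : t1 ≠ t3) (h23 : t2 ≠ t3) :
    op (A t1 + A t2 + A t3) + op (B t1 + B t2 + B t3) + op (C t1 + C t2 + C t3) = 0 := by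
  have hij : i ≠ j := fun h => by rw [h] at hiA; rw [hiA] at hjA; exact absurd hjA (by norm_num)
  obtain ⟨mA, himA, hApos⟩ := pair_char hA1 hiA
  obtain ⟨nA, hjnA, hAneg⟩ := pair_char hA2 hjA
  obtain ⟨mB, hjmB, hBpos⟩ := pair_char hB1 hjB
  obtain ⟨nB, hinB, hBneg⟩ := pair_char hB2 hiB
  have hCi : C i = 0 := by linarith [hsum i]
  have hCj : C j = 0 := by linarith [hsum j]
  have hC0 : ∀ k, C k = 0 ↔ k = i ∨ k = j :=
    pair_char2 (zero_char hrC hC1 hC2) hij hCi hCj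
  obtain ⟨p1, q1, hpq1, hCpos⟩ := pair_char' hC1
  obtain ⟨p2, q2, hpq2, hCneg⟩ := pair_char' hC2
  have nA1 : ¬(A t1 = 1 ∧ A t2 = 1 ∧ A t3 = 1) := fun ⟨a, b, c⟩ =>
    pigeon h12 h13 h23 ((hApos t1).mp a) ((hApos t2).mp b) ((hApos t3).mp c)
  have nA2 : ¬(A t1 = -1 ∧ A t2 = -1 ∧ A t3 = -1) := fun ⟨a, b, c⟩ =>
    pigeon h12 h13 h23 ((hAneg t1).mp a) ((hAneg t2).mp b) ((hAneg t3).mp c)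
  have nB1 : ¬(B t1 = 1 ∧ B t2 = 1 ∧ B t3 = 1) := fun ⟨a, b, c⟩ =>
    pigeon h12 h13 h23 ((hBpos t1).mp a) ((hBpos t2).mp b) ((hBpos t3).mp c)
  have nB2 : ¬(B t1 = -1 ∧ B t2 = -1 ∧ B t3 = -1) := fun ⟨a, b, c⟩ =>
    pigeon h12 h13 h23 ((hBneg t1).mp a) ((hBneg t2).mp b) ((hBneg t3).mp c)
  have nC1 : ¬(C t1 = 1 ∧ C t2 = 1 ∧ C t3 = 1) := fun ⟨a, b, c⟩ =>
    pigeon h12 h13 h23 ((hCpos t1).mp a) ((hCpos t2).mp b) ((hCpos t3).mp c)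
  have nC2 : ¬(C t1 = -1 ∧ C t2 = -1 ∧ C t3 = -1) := fun ⟨a, b, c⟩ =>
    pigeon h12 h13 h23 ((hCneg t1).mp a) ((hCneg t2).mp b) ((hCneg t3).mp c)
  have bA := bound3 (hrA t1) (hrA t2) (hrA t3) nA1 nA2
  have bB := bound3 (hrB t1) (hrB t2) (hrB t3) nB1 nB2
  have bC := bound3 (hrC t1) (hrC t2) (hrC t3) nC1 nC2
  have hxyz : (A t1 + A t2 + A t3) + (B t1 + B t2 + B t3) + (C t1 + C t2 + C t3) = 0 := by
    linarith [hsum t1, hsum t2, hsum t3]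
  have o1 := op_small (A t1 + A t2 + A t3) bA.1 bA.2
  have o2 := op_small (B t1 + B t2 + B t3) bB.1 bB.2
  have o3 := op_small (C t1 + C t2 + C t3) bC.1 bC.2
  by_contra hne
  have hcase := case6 hxyz o1 o2 o3 hne
  have hrA' : ∀ k, -A k = 0 ∨ -A k = 1 ∨ -A k = -1 := fun k => negr (hrA k)
  have hrB' : ∀ k, -B k = 0 ∨ -B k = 1 ∨ -B k = -1 := fun k => negr (hrB k)
  have hrC' : ∀ k, -C k = 0 ∨ -C k = 1 ∨ -C k = -1 := fun k => negr (hrC k)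
  have hsum' : ∀ k, -A k + -B k + -C k = 0 := fun k => by linarith [hsum k]
  have hsumBA : ∀ k, B k + A k + C k = 0 := fun k => by linarith [hsum k]
  have hsumBA' : ∀ k, -B k + -A k + -C k = 0 := fun k => by linarith [hsum k]
  have hApos' : ∀ k, -A k = 1 ↔ k = j ∨ k = nA := fun k => neg1.trans (hAneg k)
  have hAneg' : ∀ k, -A k = -1 ↔ k = i ∨ k = mA := fun k => neg2.trans (hApos k)
  have hBpos' : ∀ k, -B k = 1 ↔ k = i ∨ k = nB := fun k => neg1.trans (hBneg k)
  have hBneg' : ∀ k, -B k = -1 ↔ k = j ∨ k = mB := fun k => neg2.trans (hBpos k)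
  have hC0' : ∀ k, -C k = 0 ↔ k = j ∨ k = i := fun k => (neg0.trans (hC0 k)).trans or_comm
  have hC0s : ∀ k, C k = 0 ↔ k = j ∨ k = i := fun k => (hC0 k).trans or_comm
  have hC0n : ∀ k, -C k = 0 ↔ k = i ∨ k = j := fun k => neg0.trans (hC0 k)
  rcases hcase with ⟨e1, e2, e3⟩ | ⟨e1, e2, e3⟩ | ⟨e1, e2, e3⟩ | ⟨e1, e2, e3⟩ | ⟨e1, e2, e3⟩ | ⟨e1, e2, e3⟩
  · exact helperC hrA hrB hrC hsum hApos hAneg hBpos hC0 h12 h13 h23 e1 e2 e3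
  · exact helperA hrA hrB hrC hsum hApos hAneg hBpos hC0 h12 h13 h23 e1 e2 e3
  · exact helperA hrB hrA hrC hsumBA hBpos hBneg hApos hC0s h12 h13 h23 e2 e1 e3
  · exact helperC hrA' hrB' hrC' hsum' hApos' hAneg' hBpos' hC0' h12 h13 h23
      (by linarith) (by linarith) (by linarith)
  · exact helperA hrA' hrB' hrC' hsum' hApos' hAneg' hBpos' hC0' h12 h13 h23
      (by linarith) (by linarith) (by linarith)
  · exact helperA hrB' hrA' hrC' hsumBA' hBpos' hBneg' hApos' hC0n h12 h13 h23
      (by linarith) (by linarith) (by linarith)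
end


section
variable {A B C : Fin 6 → ℤ}
/-- ordered, doubled-3-cycle case: both `C = 1` cycles enter at `a`. -/
lemma ord1
    (hrA : ∀ k, A k = 0 ∨ A k = 1 ∨ A k = -1)
    (hrB : ∀ k, B k = 0 ∨ B k = 1 ∨ B k = -1)
    (hrC : ∀ k, C k = 0 ∨ C k = 1 ∨ C k = -1)
    (hsum : ∀ k, A k + B k + C k = 0)
    (hA1 : {k | A k = 1}.ncard = 2) (hA2 : {k | A k = -1}.ncard = 2)
    (hB2 : {k | B k = -1}.ncard = 2) (hC2 : {k | C k = -1}.ncard = 2)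
    {p q : Fin 6} (hpq : p ≠ q) (hCpos : ∀ k, C k = 1 ↔ k = p ∨ k = q)
    (hpA : A p = -1) (hpB : B p = 0) (hqA : A q = -1) (hqB : B q = 0) :
    ∃ t1 t2 t3 : Fin 6, t1 ≠ t2 ∧ t1 ≠ t3 ∧ t2 ≠ t3 ∧
      op (A t1 + A t2 + A t3) + op (B t1 + B t2 + B t3) + op (C t1 + C t2 + C t3) ≠ 0 := by
  have hCp : C p = 1 := (hCpos p).mpr (Or.inl rfl)
  have hCq : C q = 1 := (hCpos q).mpr (Or.inr rfl)
  have hAneg : ∀ k, A k = -1 ↔ k = p ∨ k = q := pair_char2 hA2 hpq hpA hqA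
  obtain ⟨r, s, hrs, hBneg⟩ := pair_char' hB2
  have hBr : B r = -1 := (hBneg r).mpr (Or.inl rfl)
  have hBs : B s = -1 := (hBneg s).mpr (Or.inr rfl)
  have hr' : A r = 1 ∧ C r = 0 := by
    have h1 : (A r = 1 ∧ C r = 0) ∨ (A r = 0 ∧ C r = 1) := by
      have := hsum r; have := hrA r; have := hrC r; omega
    rcases h1 with h1 | h1
    · exact h1
    · exfalso; rcases (hCpos r).mp h1.2 with rfl | rfl <;> omega
  have hs' : A s = 1 ∧ C s = 0 := by
    have h1 : (A s = 1 ∧ C s = 0) ∨ (A s = 0 ∧ C s = 1) := by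
      have := hsum s; have := hrA s; have := hrC s; omega
    rcases h1 with h1 | h1
    · exact h1
    · exfalso; rcases (hCpos s).mp h1.2 with rfl | rfl <;> omega
  have hApos : ∀ k, A k = 1 ↔ k = r ∨ k = s := pair_char2 hA1 hrs hr'.1 hs'.1
  obtain ⟨m, n, hmn, hCneg⟩ := pair_char' hC2
  have hCm : C m = -1 := (hCneg m).mpr (Or.inl rfl)
  have hm' : A m = 0 ∧ B m = 1 := by
    have h1 : (A m = 1 ∧ B m = 0) ∨ (A m = 0 ∧ B m = 1) := by
      have := hsum m; have := hrA m; have := hrB m; omega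
    rcases h1 with h1 | h1
    · exfalso; rcases (hApos m).mp h1.1 with rfl | rfl <;> omega
    · exact h1
  refine ⟨p, q, m, hpq, fun h => by rw [h] at hCp; omega,
    fun h => by rw [h] at hCq; omega, ?_⟩
  rw [show A p + A q + A m = -2 by omega, show B p + B q + B m = 1 by omega,
    show C p + C q + C m = 1 by omega]
  decide

lemma core_ordered
    (hrA : ∀ k, A k = 0 ∨ A k = 1 ∨ A k = -1)
    (hrB : ∀ k, B k = 0 ∨ B k = 1 ∨ B k = -1)
    (hrC : ∀ k, C k = 0 ∨ C k = 1 ∨ C k = -1)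
    (hsum : ∀ k, A k + B k + C k = 0)
    (hA1 : {k | A k = 1}.ncard = 2) (hA2 : {k | A k = -1}.ncard = 2)
    (hB1 : {k | B k = 1}.ncard = 2) (hB2 : {k | B k = -1}.ncard = 2)
    (hC1 : {k | C k = 1}.ncard = 2) (hC2 : {k | C k = -1}.ncard = 2)
    (hAC : ¬((∃ k, A k = 1 ∧ C k = -1) ∧ (∃ k, C k = 1 ∧ A k = -1)))
    (hBC : ¬((∃ k, B k = 1 ∧ C k = -1) ∧ (∃ k, C k = 1 ∧ B k = -1))) :
    ∃ t1 t2 t3 : Fin 6, t1 ≠ t2 ∧ t1 ≠ t3 ∧ t2 ≠ t3 ∧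
      op (A t1 + A t2 + A t3) + op (B t1 + B t2 + B t3) + op (C t1 + C t2 + C t3) ≠ 0 := by
  obtain ⟨p, q, hpq, hCpos⟩ := pair_char' hC1
  have hCp : C p = 1 := (hCpos p).mpr (Or.inl rfl)
  have hCq : C q = 1 := (hCpos q).mpr (Or.inr rfl)
  have dp : (A p = -1 ∧ B p = 0) ∨ (A p = 0 ∧ B p = -1) := by
    have := hsum p; have := hrA p; have := hrB p; omega
  have dq : (A q = -1 ∧ B q = 0) ∨ (A q = 0 ∧ B q = -1) := by
    have := hsum q; have := hrA q; have := hrB q; omega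
  have hsum' : ∀ k, B k + A k + C k = 0 := fun k => by linarith [hsum k]
  rcases dp with ⟨dp1, dp2⟩ | ⟨dp1, dp2⟩ <;> rcases dq with ⟨dq1, dq2⟩ | ⟨dq1, dq2⟩
  · exact ord1 hrA hrB hrC hsum hA1 hA2 hB2 hC2 hpq hCpos dp1 dp2 dq1 dq2
  · -- p : c→a , q : c→b : mixed, contradict orderedness
    exfalso
    obtain ⟨m, n, hmn, hCneg⟩ := pair_char' hC2
    have hCm : C m = -1 := (hCneg m).mpr (Or.inl rfl)
    have h1 : (A m = 1 ∧ B m = 0) ∨ (A m = 0 ∧ B m = 1) := by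
      have := hsum m; have := hrA m; have := hrB m; omega
    rcases h1 with h1 | h1
    · exact hAC ⟨⟨m, h1.1, hCm⟩, ⟨p, hCp, dp1⟩⟩
    · exact hBC ⟨⟨m, h1.2, hCm⟩, ⟨q, hCq, dq2⟩⟩
  · exfalso
    obtain ⟨m, n, hmn, hCneg⟩ := pair_char' hC2
    have hCm : C m = -1 := (hCneg m).mpr (Or.inl rfl)
    have h1 : (A m = 1 ∧ B m = 0) ∨ (A m = 0 ∧ B m = 1) := by
      have := hsum m; have := hrA m; have := hrB m; omega
    rcases h1 with h1 | h1
    · exact hAC ⟨⟨m, h1.1, hCm⟩, ⟨q, hCq, dq1⟩⟩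
    · exact hBC ⟨⟨m, h1.2, hCm⟩, ⟨p, hCp, dp2⟩⟩
  · obtain ⟨t1, t2, t3, h1, h2, h3, hne⟩ :=
      ord1 hrB hrA hrC hsum' hB1 hB2 hA2 hC2 hpq hCpos dp2 dp1 dq2 dq1
    exact ⟨t1, t2, t3, h1, h2, h3, fun h => hne (by linarith)⟩
end


lemma sum_three {V : Type*} [Fintype V] [DecidableEq V] (g : V → ℤ) {a b c : V}
    (hab : a ≠ b) (hac : a ≠ c) (hbc : b ≠ c)
    (h0 : ∀ w, w ≠ a → w ≠ b → w ≠ c → g w = 0) :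
    ∑ w, g w = g a + g b + g c := by
  rw [← Finset.sum_subset (Finset.subset_univ ({a, b, c} : Finset V)) (fun w _ hw => by
    simp only [Finset.mem_insert, Finset.mem_singleton] at hw
    push_neg at hw
    exact h0 w hw.1 hw.2.1 hw.2.2)]
  rw [Finset.sum_insert (by simp [hab, hac]), Finset.sum_insert (by simp [hbc]),
    Finset.sum_singleton]
  ring

/-- All the local data at a vertex `u`. -/
lemma vertex_data {V : Type*} [Fintype V] [DecidableEq V] (G : SimpleGraph V)
    (hcubic : ∀ v : V, (G.neighborSet v).ncard = 3)
    (f : Fin 6 → V → V → ℤ) (hf : IsO6c4c G f) (u : V) :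
    ∃ a b c : V, a ≠ b ∧ a ≠ c ∧ b ≠ c ∧ G.neighborSet u = {a, b, c} ∧
      (∀ k, f k a u + f k b u + f k c u = 0) ∧
      {k | f k a u = 1}.ncard = 2 ∧ {k | f k a u = -1}.ncard = 2 ∧
      {k | f k b u = 1}.ncard = 2 ∧ {k | f k b u = -1}.ncard = 2 ∧
      {k | f k c u = 1}.ncard = 2 ∧ {k | f k c u = -1}.ncard = 2 ∧
      (∀ t1 t2 t3 : Fin 6, ∑ w, op (f t1 w u + f t2 w u + f t3 w u)
          = op (f t1 a u + f t2 a u + f t3 a u)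
          + op (f t1 b u + f t2 b u + f t3 b u)
          + op (f t1 c u + f t2 c u + f t3 c u)) := by
  obtain ⟨hcyc, hcover⟩ := hf
  obtain ⟨a, b, c, hab, hac, hbc, hset⟩ := Set.ncard_eq_three.mp (hcubic u)
  have hmem : ∀ w : V, G.Adj u w ↔ (w = a ∨ w = b ∨ w = c) := by
    intro w
    constructor
    · intro h
      have : w ∈ G.neighborSet u := h
      rw [hset] at this
      simpa using this
    · intro h
      have : w ∈ G.neighborSet u := by rw [hset]; simpa using h
      exact this
  have hadja : G.Adj a u := ((hmem a).mpr (Or.inl rfl)).symm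
  have hadjb : G.Adj b u := ((hmem b).mpr (Or.inr (Or.inl rfl))).symm
  have hadjc : G.Adj c u := ((hmem c).mpr (Or.inr (Or.inr rfl))).symm
  have hzero : ∀ k w, w ≠ a → w ≠ b → w ≠ c → f k w u = 0 := by
    intro k w h1 h2 h3
    by_contra hnz
    have := ((hcyc k).2.1 w u hnz).symm
    rw [hmem w] at this
    tauto
  have hdiv : ∀ k, f k a u + f k b u + f k c u = 0 := by
    intro k
    have h1 : ∑ w, f k u w = 0 := (hcyc k).2.2.2 u
    have h2 : ∑ w, f k u w = f k u a + f k u b + f k u c := by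
      apply sum_three _ hab hac hbc
      intro w w1 w2 w3
      by_contra hnz
      have := (hcyc k).2.1 u w hnz
      rw [hmem w] at this
      tauto
    have s1 := (hcyc k).1 u a
    have s2 := (hcyc k).1 u b
    have s3 := (hcyc k).1 u c
    rw [h2] at h1
    omega
  refine ⟨a, b, c, hab, hac, hbc, hset, hdiv,
    (hcover a u hadja).1, (hcover a u hadja).2,
    (hcover b u hadjb).1, (hcover b u hadjb).2,
    (hcover c u hadjc).1, (hcover c u hadjc).2, ?_⟩
  intro t1 t2 t3
  apply sum_three _ hab hac hbc
  intro w w1 w2 w3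
  rw [hzero t1 w w1 w2 w3, hzero t2 w w1 w2 w3, hzero t3 w w1 w2 w3]
  decide


/-- In any oriented 6-cycle 4-cover of a cubic graph, the number of ordered
vertices is never equal to 1. -/
theorem stmt10 {V : Type*} [Fintype V] (G : SimpleGraph V)
    (hcubic : ∀ v : V, (G.neighborSet v).ncard = 3)
    (f : Fin 6 → V → V → ℤ) (hf : IsO6c4c G f) :
    Set.ncard {v : V | OrderedVertex f v} ≠ 1 := by

  classical
  intro h1
  obtain ⟨v, hv⟩ := Set.ncard_eq_one.mp h1
  obtain ⟨hcyc, hcover⟩ := id hf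
  have hskew : ∀ i (x y : V), f i x y = - f i y x := fun i => (hcyc i).1
  have hrange : ∀ i (x y : V), f i x y = 0 ∨ f i x y = 1 ∨ f i x y = -1 :=
    fun i => (hcyc i).2.2.1
  obtain ⟨a, b, c, hab, hac, hbc, hset, hdiv, A1, A2, B1, B2, C1, C2, hrow⟩ :=
    vertex_data G hcubic f hf v
  have hOrdv : OrderedVertex f v := by
    have : v ∈ {w | OrderedVertex f w} := by rw [hv]; rfl
    exact this
  have hAC : ¬((∃ k, f k a v = 1 ∧ f k c v = -1) ∧ (∃ k, f k c v = 1 ∧ f k a v = -1)) := by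
    rintro ⟨⟨k1, h1', h2'⟩, ⟨k2, h3', h4'⟩⟩
    exact hOrdv a c ⟨⟨k1, h1', by have := hskew k1 v c; omega⟩,
      ⟨k2, h3', by have := hskew k2 v a; omega⟩⟩
  have hBC : ¬((∃ k, f k b v = 1 ∧ f k c v = -1) ∧ (∃ k, f k c v = 1 ∧ f k b v = -1)) := by
    rintro ⟨⟨k1, h1', h2'⟩, ⟨k2, h3', h4'⟩⟩
    exact hOrdv b c ⟨⟨k1, h1', by have := hskew k1 v c; omega⟩,
      ⟨k2, h3', by have := hskew k2 v b; omega⟩⟩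
  obtain ⟨t1, t2, t3, h12, h13, h23, hnev⟩ :=
    core_ordered (fun k => hrange k a v) (fun k => hrange k b v) (fun k => hrange k c v)
      hdiv A1 A2 B1 B2 C1 C2 hAC hBC
  set S := ∑ u : V, ∑ w : V, op (f t1 w u + f t2 w u + f t3 w u) with hS
  have hS0 : S = 0 := by
    have h1' : S = ∑ u : V, ∑ w : V, op (f t1 u w + f t2 u w + f t3 u w) :=
      Finset.sum_comm
    have h2' : ∀ u w : V, op (f t1 u w + f t2 u w + f t3 u w)
        = - op (f t1 w u + f t2 w u + f t3 w u) := by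
      intro u w
      have e : f t1 u w + f t2 u w + f t3 u w = -(f t1 w u + f t2 w u + f t3 w u) := by
        have := hskew t1 u w; have := hskew t2 u w; have := hskew t3 u w; omega
      rw [e, op_neg]
    have h3' : S = -S := by
      nth_rewrite 1 [h1']
      calc ∑ u : V, ∑ w : V, op (f t1 u w + f t2 u w + f t3 u w)
          = ∑ u : V, ∑ w : V, - op (f t1 w u + f t2 w u + f t3 w u) := by
            exact Finset.sum_congr rfl fun u _ => Finset.sum_congr rfl fun w _ => h2' u w
        _ = -S := by rw [hS]; simp
    omega
  have hother : ∀ u ∈ (Finset.univ : Finset V), u ≠ v →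
      ∑ w : V, op (f t1 w u + f t2 w u + f t3 w u) = 0 := by
    intro u _ hne
    obtain ⟨a', b', c', hab', hac', hbc', hset', hdiv', A1', A2', B1', B2', C1', C2', hrow'⟩ :=
      vertex_data G hcubic f hf u
    rw [hrow' t1 t2 t3]
    have hno : ¬ OrderedVertex f u := by
      intro ho
      have hmm : u ∈ {w | OrderedVertex f w} := ho
      rw [hv] at hmm
      exact hne hmm
    simp only [OrderedVertex, not_forall, not_not] at hno
    obtain ⟨x, y, ⟨k1, e1, e2⟩, ⟨k2, e3, e4⟩⟩ := hno
    have e2' : f k1 y u = -1 := by have := hskew k1 u y; omega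
    have e4' : f k2 x u = -1 := by have := hskew k2 u x; omega
    have hxy : x ≠ y := fun h => by rw [h] at e1; omega
    have hxmem : x = a' ∨ x = b' ∨ x = c' := by
      have hA : G.Adj x u := (hcyc k1).2.1 x u (by rw [e1]; norm_num)
      have : x ∈ G.neighborSet u := hA.symm
      rw [hset'] at this; simpa using this
    have hymem : y = a' ∨ y = b' ∨ y = c' := by
      have hA : G.Adj y u := (hcyc k2).2.1 y u (by rw [e3]; norm_num)
      have : y ∈ G.neighborSet u := hA.symm
      rw [hset'] at this; simpa using this
    rcases hxmem with rfl | rfl | rfl <;> rcases hymem with rfl | rfl | rfl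
    · exact absurd rfl hxy
    · have h := core_disordered (fun k => hrange k x u) (fun k => hrange k y u)
        (fun k => hrange k c' u) (fun k => by linarith [hdiv' k])
        A1' A2' B1' B2' C1' C2' e1 e2' e4' e3 h12 h13 h23
      linarith [h]
    · have h := core_disordered (fun k => hrange k x u) (fun k => hrange k y u)
        (fun k => hrange k b' u) (fun k => by linarith [hdiv' k])
        A1' A2' C1' C2' B1' B2' e1 e2' e4' e3 h12 h13 h23
      linarith [h]
    · have h := core_disordered (fun k => hrange k x u) (fun k => hrange k y u)
        (fun k => hrange k c' u) (fun k => by linarith [hdiv' k])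
        B1' B2' A1' A2' C1' C2' e1 e2' e4' e3 h12 h13 h23
      linarith [h]
    · exact absurd rfl hxy
    · have h := core_disordered (fun k => hrange k x u) (fun k => hrange k y u)
        (fun k => hrange k a' u) (fun k => by linarith [hdiv' k])
        B1' B2' C1' C2' A1' A2' e1 e2' e4' e3 h12 h13 h23
      linarith [h]
    · have h := core_disordered (fun k => hrange k x u) (fun k => hrange k y u)
        (fun k => hrange k b' u) (fun k => by linarith [hdiv' k])
        C1' C2' A1' A2' B1' B2' e1 e2' e4' e3 h12 h13 h23
      linarith [h]
    · have h := core_disordered (fun k => hrange k x u) (fun k => hrange k y u)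
        (fun k => hrange k a' u) (fun k => by linarith [hdiv' k])
        C1' C2' B1' B2' A1' A2' e1 e2' e4' e3 h12 h13 h23
      linarith [h]
    · exact absurd rfl hxy
  have hSv : S = op (f t1 a v + f t2 a v + f t3 a v)
      + op (f t1 b v + f t2 b v + f t3 b v)
      + op (f t1 c v + f t2 c v + f t3 c v) := by
    rw [hS, Finset.sum_eq_single_of_mem v (Finset.mem_univ v) hother, hrow t1 t2 t3]
  exact hnev (hSv.symm.trans hS0)
end

section
/- Given any 3 cycles of a 6c4c of a bridgeless cubic graph, the subgraph consisting of edges covered 0, 1, or 2 times by these 3 cycles admits a nowhere-zero 4-flow. -/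
/-- A 6-cycle 4-cover: 6 even subgraphs such that every edge is covered
exactly 4 times. -/
def Is6c4c {V : Type*} (G : SimpleGraph V) (C : Fin 6 → Set (Sym2 V)) : Prop :=
  (∀ i, IsEvenSubgraph G (C i)) ∧
  (∀ e ∈ G.edgeSet, Set.ncard {i : Fin 6 | e ∈ C i} = 4)

/-!
Among three cycles `C₀, C₁, C₂` of a 6c4c, an edge lies in `C₀ ∆ C₁ ∪ C₀ ∆ C₂` exactly when it is
covered once or twice; no edge is covered zero times, since it lies in four of the six cycles.
Every even subgraph is an edge-disjoint union of closed trails, and orienting each trail gives it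
a nowhere-zero 2-flow. If `f` and `g` are such flows on `C₀ ∆ C₁` and `C₀ ∆ C₂`, then `f + 2 g`
is a nowhere-zero 4-flow on their union.
-/

open scoped symmDiff

theorem Set.even_ncard_symmDiff {α : Type*} [Finite α] {s t : Set α} (hs : Even s.ncard)
    (ht : Even t.ncard) : Even (s ∆ t).ncard := by
  have hst := ncard_inter_add_ncard_sdiff_eq_ncard s t
  have hts := ncard_inter_add_ncard_sdiff_eq_ncard t s
  rw [inter_comm] at hts
  rw [Set.symmDiff_def, ncard_union_eq disjoint_sdiff_sdiff]
  rw [Nat.even_iff] at *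
  omega

theorem Set.ncard_lt_card_iff_exists_notMem {α : Type*} [Finite α] {s : Set α} :
    s.ncard < Nat.card α ↔ ∃ a, a ∉ s := by
  rw [← ne_univ_iff_exists_notMem]
  exact ⟨fun h hs => h.ne ((eq_univ_iff_ncard s).1 hs), ncard_lt_card⟩

theorem List.Nodup.ncard_setOf_mem_and {α : Type*} {l : List α} (hl : l.Nodup) (p : α → Prop)
    [DecidablePred p] : {x | x ∈ l ∧ p x}.ncard = l.countP (fun x => p x) := by
  classical
  have : {x | x ∈ l ∧ p x} = ↑(l.filter (fun x => p x)).toFinset := by ext; simp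
  rw [this, Set.ncard_coe_finset, List.toFinset_card_of_nodup (hl.filter _),
    List.countP_eq_length_filter]

theorem Sym2.ncard_setOf_mk_mem {α : Type*} (S : Set (Sym2 α)) (a : α) :
    {b | s(a, b) ∈ S}.ncard = {e ∈ S | a ∈ e}.ncard := by
  rw [← Set.ncard_image_of_injective _ (fun _ _ => Sym2.congr_right.mp :
    Function.Injective fun b => s(a, b))]
  congr 1
  ext e
  constructor
  · rintro ⟨b, hb, rfl⟩
    exact ⟨hb, Sym2.mem_mk_left a b⟩
  · rintro ⟨he, ha⟩
    obtain ⟨b, rfl⟩ := Sym2.mem_iff_exists.mp ha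
    exact ⟨b, he, rfl⟩

theorem Set.mem_symmDiff_union_symmDiff_iff {α : Type*} (X : Fin 3 → Set α) (a : α) :
    a ∈ X 0 ∆ X 1 ∪ X 0 ∆ X 2 ↔ (∃ j, a ∈ X j) ∧ ∃ j, a ∉ X j := by
  simp only [Set.mem_union, Set.mem_symmDiff, Fin.exists_fin_succ, Fin.exists_fin_zero]
  tauto

structure IsNowhereZeroFlow {V : Type*} [Fintype V] (E : Set (Sym2 V)) (k : ℤ)
    (f : V → V → ℤ) : Prop where
  skew : ∀ u v, f u v = - f v u
  ne_zero_iff : ∀ u v, f u v ≠ 0 ↔ s(u, v) ∈ E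
  abs_lt : ∀ u v, |f u v| < k
  sum_eq_zero : ∀ v, ∑ w, f v w = 0

namespace IsNowhereZeroFlow

variable {V : Type*} [Fintype V] {A B : Set (Sym2 V)} {k : ℤ} {f g : V → V → ℤ}

theorem empty (hk : 0 < k) : IsNowhereZeroFlow (∅ : Set (Sym2 V)) k 0 :=
  ⟨by simp, by simp, fun _ _ => by simpa using hk, by simp⟩

theorem add (hf : IsNowhereZeroFlow A k f) (hg : IsNowhereZeroFlow B k g) (hAB : Disjoint A B) :
    IsNowhereZeroFlow (A ∪ B) k (f + g) := by
  have hzero u v : f u v = 0 ∨ g u v = 0 := by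
    by_contra! h
    exact hAB.notMem_of_mem_left ((hf.ne_zero_iff u v).1 h.1) ((hg.ne_zero_iff u v).1 h.2)
  refine ⟨fun u v => ?_, fun u v => ?_, fun u v => ?_, fun v => ?_⟩
  · simp only [Pi.add_apply, hf.skew u v, hg.skew u v]
    ring
  · rw [Set.mem_union, ← hf.ne_zero_iff, ← hg.ne_zero_iff, Pi.add_apply, Pi.add_apply]
    have := hzero u v
    omega
  · rcases hzero u v with h | h <;> simp [h, hf.abs_lt, hg.abs_lt]
  · simp [Finset.sum_add_distrib, hf.sum_eq_zero, hg.sum_eq_zero]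

theorem add_two_mul (hf : IsNowhereZeroFlow A 2 f) (hg : IsNowhereZeroFlow B 2 g) :
    IsNowhereZeroFlow (A ∪ B) 4 (fun u v => f u v + 2 * g u v) := by
  refine ⟨fun u v => ?_, fun u v => ?_, fun u v => ?_, fun v => ?_⟩
  · simp only [hf.skew u v, hg.skew u v]
    ring
  · have hfu := _root_.abs_lt.1 (hf.abs_lt u v)
    have hgu := _root_.abs_lt.1 (hg.abs_lt u v)
    rw [Set.mem_union, ← hf.ne_zero_iff, ← hg.ne_zero_iff]
    omega
  · have hfu := _root_.abs_lt.1 (hf.abs_lt u v)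
    have hgu := _root_.abs_lt.1 (hg.abs_lt u v)
    rw [_root_.abs_lt]
    omega
  · simp [Finset.sum_add_distrib, ← Finset.mul_sum, hf.sum_eq_zero, hg.sum_eq_zero]

end IsNowhereZeroFlow

section WalkFlow

variable {V : Type*} [DecidableEq V]

def unitFlow (x y u v : V) : ℤ :=
  (if u = x ∧ v = y then 1 else 0) - (if u = y ∧ v = x then 1 else 0)

theorem unitFlow_skew (x y u v : V) : unitFlow x y u v = - unitFlow x y v u := by
  unfold unitFlow
  simp only [and_comm (a := v = x), and_comm (a := v = y)]
  ring

theorem abs_unitFlow {x y : V} (hxy : x ≠ y) (u v : V) :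
    |unitFlow x y u v| = if s(u, v) = s(x, y) then 1 else 0 := by
  unfold unitFlow
  by_cases hfwd : u = x ∧ v = y
  · obtain ⟨rfl, rfl⟩ := hfwd
    simp [hxy]
  by_cases hbwd : u = y ∧ v = x
  · obtain ⟨rfl, rfl⟩ := hbwd
    simp [hxy, Sym2.eq_swap]
  simp [hfwd, hbwd]

theorem sum_unitFlow [Fintype V] (x y v : V) :
    ∑ w, unitFlow x y v w = (if v = x then 1 else 0) - (if v = y then 1 else 0) := by
  simp [unitFlow, Finset.sum_sub_distrib, ite_and]

namespace SimpleGraph.Walk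

variable {G : SimpleGraph V}

def flow {a b : V} (p : G.Walk a b) (u v : V) : ℤ :=
  (p.darts.map fun d => unitFlow d.fst d.snd u v).sum

@[simp] theorem flow_nil {a : V} (u v : V) : (nil : G.Walk a a).flow u v = 0 := rfl

@[simp] theorem flow_cons {a b c : V} (h : G.Adj a b) (p : G.Walk b c) (u v : V) :
    (cons h p).flow u v = unitFlow a b u v + p.flow u v := by
  simp [flow]

theorem flow_skew {a b : V} (p : G.Walk a b) (u v : V) : p.flow u v = - p.flow v u := by
  induction p with
  | nil => simp
  | cons h p ih =>
    rw [flow_cons, flow_cons, ih, unitFlow_skew]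
    ring

theorem sum_flow [Fintype V] {a b : V} (p : G.Walk a b) (v : V) :
    ∑ w, p.flow v w = (if v = a then 1 else 0) - (if v = b then 1 else 0) := by
  induction p with
  | nil => simp
  | cons h p ih =>
    simp only [flow_cons, Finset.sum_add_distrib, sum_unitFlow, ih]
    ring

theorem IsTrail.abs_flow {a b : V} {p : G.Walk a b} (hp : p.IsTrail) (u v : V) :
    |p.flow u v| = if s(u, v) ∈ p.edges then 1 else 0 := by
  induction p with
  | nil => simp
  | @cons x y _ h q ih =>
    rw [isTrail_cons] at hp
    simp only [flow_cons, edges_cons, List.mem_cons]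
    by_cases huv : s(u, v) = s(x, y)
    · have hq : q.flow u v = 0 := by simpa [huv, hp.2] using ih hp.1
      simp [hq, abs_unitFlow h.ne, huv]
    · have hxy : unitFlow x y u v = 0 := by simpa [huv] using abs_unitFlow h.ne u v
      simp [hxy, huv, ih hp.1]

theorem IsTrail.isNowhereZeroFlow_flow [Fintype V] {a : V} {p : G.Walk a a} (hp : p.IsTrail) :
    IsNowhereZeroFlow {e | e ∈ p.edges} 2 p.flow where
  skew := p.flow_skew
  ne_zero_iff u v := by
    rw [← abs_ne_zero, hp.abs_flow]
    split_ifs <;> simpa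
  abs_lt u v := by
    rw [hp.abs_flow]
    split_ifs <;> norm_num
  sum_eq_zero v := by simp [sum_flow]

theorem IsTrail.even_ncard_setOf_mem_edges_iff {a b : V} {p : G.Walk a b} (hp : p.IsTrail)
    (x : V) : Even {e | e ∈ p.edges ∧ x ∈ e}.ncard ↔ (a ≠ b → x ≠ a ∧ x ≠ b) := by
  rw [hp.edges_nodup.ncard_setOf_mem_and]
  exact hp.even_countP_edges_iff x

end SimpleGraph.Walk

end WalkFlow

section EvenSubgraph

variable {V : Type*} {G : SimpleGraph V}

theorem isEvenSubgraph_iff {E : Set (Sym2 V)} :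
    IsEvenSubgraph G E ↔ E ⊆ G.edgeSet ∧ ∀ v, Even {e ∈ E | v ∈ e}.ncard := by
  simp only [IsEvenSubgraph, Sym2.ncard_setOf_mk_mem]

namespace IsEvenSubgraph

variable [Fintype V]

theorem symmDiff {A B : Set (Sym2 V)} (hA : IsEvenSubgraph G A) (hB : IsEvenSubgraph G B) :
    IsEvenSubgraph G (A ∆ B) :=
  ⟨fun _ he => he.elim (fun h => hA.1 h.1) (fun h => hB.1 h.1),
    fun v => Set.even_ncard_symmDiff (hA.2 v) (hB.2 v)⟩

theorem diff_edges {E : Set (Sym2 V)} (hE : IsEvenSubgraph G E) {a : V}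
    {p : G.Walk a a} (hp : p.IsTrail) (hpE : {e | e ∈ p.edges} ⊆ E) :
    IsEvenSubgraph G (E \ {e | e ∈ p.edges}) := by
  classical
  rw [isEvenSubgraph_iff] at hE ⊢
  refine ⟨Set.sdiff_subset.trans hE.1, fun v => ?_⟩
  have hsplit : {e ∈ E \ {e | e ∈ p.edges} | v ∈ e}
      = {e ∈ E | v ∈ e} \ {e | e ∈ p.edges ∧ v ∈ e} := by
    ext e
    simp only [Set.mem_sdiff, Set.mem_ofPred_eq]
    tauto
  have hsub : {e | e ∈ p.edges ∧ v ∈ e} ⊆ {e ∈ E | v ∈ e} := fun e he => ⟨hpE he.1, he.2⟩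
  rw [hsplit, Set.ncard_sdiff hsub]
  exact (Nat.even_sub (Set.ncard_le_ncard hsub)).mpr
    (iff_of_true (hE.2 v) ((hp.even_ncard_setOf_mem_edges_iff v).mpr (absurd rfl)))

theorem exists_closed_trail {E : Set (Sym2 V)} (hE : IsEvenSubgraph G E)
    (hne : E.Nonempty) :
    ∃ (a : V) (p : G.Walk a a), p.IsTrail ∧ p.edges ≠ [] ∧ {e | e ∈ p.edges} ⊆ E := by
  classical
  rw [isEvenSubgraph_iff] at hE
  let HasTrailOfLength (n : ℕ) : Prop :=
    ∃ (a b : V) (p : G.Walk a b), p.IsTrail ∧ {e | e ∈ p.edges} ⊆ E ∧ p.length = n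
  have length_le {n : ℕ} (hn : HasTrailOfLength n) : n ≤ E.ncard := by
    obtain ⟨a, b, p, hp, hpE, rfl⟩ := hn
    rw [← p.length_edges, ← List.toFinset_card_of_nodup hp.edges_nodup, ← Set.ncard_coe_finset]
    exact Set.ncard_le_ncard (by simpa using hpE)
  obtain ⟨e, he⟩ := hne
  induction e using Sym2.ind with | _ x y =>
  have hxy : G.Adj x y := hE.1 he
  have hone : HasTrailOfLength 1 := ⟨x, y, hxy.toWalk, by simp, by simpa using he, rfl⟩
  -- A longest trail in `E` is closed: at an open end it has used an odd number of the evenly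
  -- many edges of `E` there, leaving one to extend it by.
  set n := Nat.findGreatest HasTrailOfLength E.ncard
  obtain ⟨a, b, p, hp, hpE, hlen⟩ := Nat.findGreatest_spec (length_le hone) hone
  by_cases hab : a = b
  · subst hab
    refine ⟨a, p, hp, ?_, hpE⟩
    rw [← List.length_pos_iff, p.length_edges, hlen]
    exact Nat.findGreatest_pos.mpr ⟨1, one_pos, length_le hone, hone⟩
  exfalso
  have hodd : ¬ Even {e | e ∈ p.edges ∧ b ∈ e}.ncard := by
    rw [hp.even_ncard_setOf_mem_edges_iff]
    simp [hab]
  obtain ⟨e, ⟨heE, hbe⟩, hep⟩ : ∃ e ∈ {e ∈ E | b ∈ e}, e ∉ p.edges := by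
    by_contra! h
    have : {e | e ∈ p.edges ∧ b ∈ e} = {e ∈ E | b ∈ e} :=
      Set.Subset.antisymm (fun e he => ⟨hpE he.1, he.2⟩) (fun e he => ⟨h e he, he.2⟩)
    exact hodd (this ▸ hE.2 b)
  obtain ⟨w, rfl⟩ := Sym2.mem_iff_exists.mp hbe
  have hbw : G.Adj b w := hE.1 heE
  have hlonger : HasTrailOfLength (n + 1) := by
    refine ⟨a, w, p.concat hbw, ?_, ?_, by simp [hlen, n]⟩
    · rw [SimpleGraph.Walk.isTrail_def, SimpleGraph.Walk.edges_concat]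
      exact hp.edges_nodup.concat hep
    · intro e he
      rw [Set.mem_ofPred_eq, SimpleGraph.Walk.edges_concat, List.concat_eq_append,
        List.mem_append, List.mem_singleton] at he
      exact he.elim (fun h => hpE h) (fun h => h ▸ heE)
  exact Nat.findGreatest_is_greatest (Nat.lt_succ_self n) (length_le hlonger) hlonger

theorem exists_isNowhereZeroFlow_two {E : Set (Sym2 V)} (hE : IsEvenSubgraph G E) :
    ∃ f : V → V → ℤ, IsNowhereZeroFlow E 2 f := by
  classical
  rcases E.eq_empty_or_nonempty with rfl | hne
  · exact ⟨0, .empty two_pos⟩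
  obtain ⟨a, p, hp, hp_ne, hpE⟩ := hE.exists_closed_trail hne
  have : (E \ {e | e ∈ p.edges}).ncard < E.ncard := by
    obtain ⟨e, he⟩ := List.exists_mem_of_ne_nil _ hp_ne
    exact Set.ncard_lt_ncard (Set.sdiff_ssubset_left_iff.mpr ⟨e, hpE he, he⟩)
  obtain ⟨f, hf⟩ := (hE.diff_edges hp hpE).exists_isNowhereZeroFlow_two
  refine ⟨p.flow + f, ?_⟩
  simpa [Set.union_sdiff_cancel hpE] using
    hp.isNowhereZeroFlow_flow.add hf disjoint_sdiff_self_right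
termination_by E.ncard

end IsEvenSubgraph

namespace Is6c4c

variable {C : Fin 6 → Set (Sym2 V)} {σ : Fin 3 → Fin 6}

theorem exists_mem_of_injective (hC : Is6c4c G C) (hσ : σ.Injective) {e : Sym2 V}
    (he : e ∈ G.edgeSet) : ∃ j, e ∈ C (σ j) := by
  by_contra! h
  have hsub : {i | e ∈ C i} ⊆ (Set.range σ)ᶜ := by
    rintro i hi ⟨j, rfl⟩
    exact h j hi
  have := Set.ncard_le_ncard hsub
  rw [Set.ncard_compl, Set.ncard_range_of_injective hσ, hC.2 e he] at this
  simp at this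

theorem symmDiff_union_symmDiff_eq (hC : Is6c4c G C) (hσ : σ.Injective) :
    C (σ 0) ∆ C (σ 1) ∪ C (σ 0) ∆ C (σ 2)
      = {e ∈ G.edgeSet | Set.ncard {j : Fin 3 | e ∈ C (σ j)} ≤ 2} := by
  ext e
  rw [Set.mem_symmDiff_union_symmDiff_iff (fun j => C (σ j)), Set.mem_ofPred_eq,
    Nat.le_iff_lt_add_one, show 2 + 1 = Nat.card (Fin 3) by simp,
    Set.ncard_lt_card_iff_exists_notMem]
  constructor
  · rintro ⟨⟨j, hj⟩, hnot⟩
    exact ⟨(hC.1 (σ j)).1 hj, hnot⟩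
  · rintro ⟨he, hnot⟩
    exact ⟨hC.exists_mem_of_injective hσ he, hnot⟩

end Is6c4c

end EvenSubgraph

theorem stmt12_general {V : Type*} [Fintype V] (G : SimpleGraph V)
    (C : Fin 6 → Set (Sym2 V)) (hC : Is6c4c G C)
    (σ : Fin 3 → Fin 6) (hσ : Function.Injective σ) :
    ∃ φ : V → V → ℤ,
      (∀ u v, φ u v = - φ v u) ∧
      (∀ u v, φ u v ≠ 0 ↔
        s(u, v) ∈ {e ∈ G.edgeSet | Set.ncard {j : Fin 3 | e ∈ C (σ j)} ≤ 2}) ∧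
      (∀ u v, |φ u v| < 4) ∧
      (∀ v, ∑ w, φ v w = 0) := by
  have hsymmDiff i j : IsEvenSubgraph G (C (σ i) ∆ C (σ j)) := (hC.1 _).symmDiff (hC.1 _)
  obtain ⟨f, hf⟩ := (hsymmDiff 0 1).exists_isNowhereZeroFlow_two
  obtain ⟨g, hg⟩ := (hsymmDiff 0 2).exists_isNowhereZeroFlow_two
  have hφ := hf.add_two_mul hg
  rw [hC.symmDiff_union_symmDiff_eq hσ] at hφ
  exact ⟨_, hφ.skew, hφ.ne_zero_iff, hφ.abs_lt, hφ.sum_eq_zero⟩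

/-- Given any 3 cycles of a 6c4c of a bridgeless cubic graph, the subgraph
consisting of the edges covered 0, 1 or 2 times by these 3 cycles admits a
nowhere-zero 4-flow: a skew-symmetric, divergence-free integer flow that is
nonzero exactly on these edges, with all values of absolute value < 4. -/
theorem stmt12 {V : Type*} [Fintype V] (G : SimpleGraph V)
    (hbridgeless : ∀ e ∈ G.edgeSet, ¬ G.IsBridge e)
    (hcubic : ∀ v : V, (G.neighborSet v).ncard = 3)
    (C : Fin 6 → Set (Sym2 V)) (hC : Is6c4c G C)
    (σ : Fin 3 → Fin 6) (hσ : Function.Injective σ) :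
    ∃ φ : V → V → ℤ,
      (∀ u v, φ u v = - φ v u) ∧
      (∀ u v, φ u v ≠ 0 ↔
        s(u, v) ∈ {e ∈ G.edgeSet | Set.ncard {j : Fin 3 | e ∈ C (σ j)} ≤ 2}) ∧
      (∀ u v, |φ u v| < 4) ∧
      (∀ v, ∑ w, φ v w = 0) :=
  stmt12_general G C hC σ hσ
end
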